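/- arXiv:1608.06797 — 3 statements merged into one kernel-verified Lean document; each statement's English description precedes it below -/
import Mathlib

section
/- Let G=(V,E) be a finite simple graph with Gallai–Edmonds decomposition V = X ∪ Y ∪ Z such that Z = ∅ and every connected component of G[X] is nontrivial, and let (M*, y*, c*) be an optimal MFASP solution satisfying properties (a)–(d). If M* exposes a vertex of the connected component K of G[X], then ∑_{e∈E} c*_e ≥ f(K) + r − 1. -/
open Finset
open scoped Classical

noncomputable section

namespace Stab

variable {V : Type*}

/-- A matching of `G`: a finite set of edges of `G` that are pairwise vertex-disjoint. -/
def IsMatching (G : SimpleGraph V) (M : Finset (Sym2 V)) : Prop :=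
  (∀ e ∈ M, e ∈ G.edgeSet) ∧
    ∀ e ∈ M, ∀ f ∈ M, e ≠ f → ∀ v : V, v ∈ e → v ∉ f

/-- `v` is exposed by `M` (no edge of `M` contains it). -/
def Exposed (M : Finset (Sym2 V)) (v : V) : Prop := ∀ e ∈ M, v ∉ e

/-- total `w`-weight of a finite set of edges -/
def weight (w : Sym2 V → ℝ) (M : Finset (Sym2 V)) : ℝ := ∑ e ∈ M, w e

/-- the edge set of `G`, as a finset -/
def edgeFin [Fintype V] [DecidableEq V] (G : SimpleGraph V) : Finset (Sym2 V) :=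
  Finset.univ.filter fun e => e ∈ G.edgeSet

/-- the edges of `G` having both endpoints in `S` -/
def edgesIn [Fintype V] [DecidableEq V] (G : SimpleGraph V) (S : Set V) : Finset (Sym2 V) :=
  Finset.univ.filter fun e => e ∈ G.edgeSet ∧ ∀ v ∈ e, v ∈ S

/-- `ν(G,w)`: the maximum total `w`-weight of a matching of `G` -/
def nuW (G : SimpleGraph V) (w : Sym2 V → ℝ) : ℝ :=
  sSup {x | ∃ M, IsMatching G M ∧ x = weight w M}

/-- `y` is a fractional `w`-vertex cover of `G` -/
def IsFracCover (G : SimpleGraph V) (w : Sym2 V → ℝ) (y : V → ℝ) : Prop :=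
  (∀ v, 0 ≤ y v) ∧ ∀ u v : V, G.Adj u v → w s(u, v) ≤ y u + y v

/-- `τ_f(G,w)`: the minimum value of a fractional `w`-vertex cover of `G` -/
def tauW [Fintype V] (G : SimpleGraph V) (w : Sym2 V → ℝ) : ℝ :=
  sInf {x | ∃ y, IsFracCover G w y ∧ x = ∑ v, y v}

/-- the weighted graph `(G,w)` is stable -/
def IsStable [Fintype V] (G : SimpleGraph V) (w : Sym2 V → ℝ) : Prop :=
  nuW G w = tauW G w

/-- `c` is a fractional additive stabilizer for the unit-weight graph `G` -/
def IsStabilizer [Fintype V] [DecidableEq V] (G : SimpleGraph V) (c : Sym2 V → ℝ) : Prop :=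
  (∀ e ∈ edgeFin G, 0 ≤ c e) ∧ IsStable G fun e => 1 + c e

/-- the cost `∑_{e ∈ E} c_e` of `c` -/
def cost [Fintype V] [DecidableEq V] (G : SimpleGraph V) (c : Sym2 V → ℝ) : ℝ :=
  ∑ e ∈ edgeFin G, c e

/-- `c` is a minimum fractional additive stabilizer of `G` -/
def IsMinStabilizer [Fintype V] [DecidableEq V] (G : SimpleGraph V) (c : Sym2 V → ℝ) : Prop :=
  IsStabilizer G c ∧ ∀ c', IsStabilizer G c' → cost G c ≤ cost G c'

/-- `OPT`: the minimum cost of a fractional additive stabilizer of `G` -/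
def optCost [Fintype V] [DecidableEq V] (G : SimpleGraph V) : ℝ :=
  sInf {x | ∃ c, IsStabilizer G c ∧ x = cost G c}

/-- `ν(G)`: the maximum cardinality of a matching of `G` -/
def nu (G : SimpleGraph V) : ℕ :=
  sSup {n | ∃ M, IsMatching G M ∧ M.card = n}

/-- `M` is a maximum-cardinality matching of `G` -/
def IsMaxMatching (G : SimpleGraph V) (M : Finset (Sym2 V)) : Prop :=
  IsMatching G M ∧ ∀ M', IsMatching G M' → M'.card ≤ M.card

/-- `M` is a matching of maximum `w`-weight in `G` -/
def IsMaxWeightMatching (G : SimpleGraph V) (w : Sym2 V → ℝ) (M : Finset (Sym2 V)) : Prop :=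
  IsMatching G M ∧ ∀ M', IsMatching G M' → weight w M' ≤ weight w M

/-- a feasible solution `(M,y,c)` of MFASP on `G` -/
def FeasSol [Fintype V] [DecidableEq V] (G : SimpleGraph V)
    (M : Finset (Sym2 V)) (y : V → ℝ) (c : Sym2 V → ℝ) : Prop :=
  IsMatching G M ∧ (∀ e ∈ edgeFin G, 0 ≤ c e) ∧
    IsFracCover G (fun e => 1 + c e) y ∧
    (∑ e ∈ M, (1 + c e)) = ∑ v, y v

/-- an optimal solution of MFASP on `G` -/
def OptSol [Fintype V] [DecidableEq V] (G : SimpleGraph V)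
    (M : Finset (Sym2 V)) (y : V → ℝ) (c : Sym2 V → ℝ) : Prop :=
  FeasSol G M y c ∧ IsMinStabilizer G c

/-- `v` is inessential: some maximum-cardinality matching exposes `v` -/
def Inessential (G : SimpleGraph V) (v : V) : Prop :=
  ∃ M, IsMaxMatching G M ∧ Exposed M v

/-- the set `X` of the Gallai–Edmonds decomposition -/
def geX (G : SimpleGraph V) : Set V := {v | Inessential G v}

/-- the Tutte set `Y = N(X) \ X` of the Gallai–Edmonds decomposition -/
def geY (G : SimpleGraph V) : Set V := {v | v ∉ geX G ∧ ∃ u ∈ geX G, G.Adj u v}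

/-- the set `Z = V \ (X ∪ Y)` of the Gallai–Edmonds decomposition -/
def geZ (G : SimpleGraph V) : Set V := {v | v ∉ geX G ∧ v ∉ geY G}

/-- `K` is a connected component of the subgraph of `G` induced on `X`. -/
def IsCompOf (G : SimpleGraph V) (X : Set V) (K : Set V) : Prop :=
  K ⊆ X ∧ (G.induce K).Connected ∧ ∀ u ∈ K, ∀ v ∈ X, G.Adj u v → v ∈ K

/-- properties (a)–(d) of a feasible MFASP solution `(M,y,c)` -/
def PropsABCD [Fintype V] [DecidableEq V] (G : SimpleGraph V)
    (M : Finset (Sym2 V)) (y : V → ℝ) (c : Sym2 V → ℝ) : Prop :=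
  (∀ e ∈ edgeFin G, e ∉ M → c e = 0) ∧
  (∀ e ∈ M, 0 ≤ c e ∧ c e ≤ 1) ∧
  M.card = nu G ∧
  (∀ e ∈ edgeFin G, ∃ z : ℤ, 2 * c e = (z : ℝ)) ∧
  (∀ v : V, y v = 0 ∨ y v = 1 / 2 ∨ y v = 1) ∧
  (∀ v ∈ geY G, 1 / 2 ≤ y v)

/-- a graph is factor-critical if deleting any vertex leaves a graph with a perfect matching -/
def IsFactorCritical (G : SimpleGraph V) : Prop :=
  ∀ v : V, ∃ M, IsMatching G M ∧ Exposed M v ∧ ∀ u : V, u ≠ v → ¬ Exposed M u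

/-- the neighbourhood `N_G(K)` of a vertex set `K` (outside of `K`) -/
def nbhd (G : SimpleGraph V) (K : Set V) : Set V :=
  {v | v ∉ K ∧ ∃ u ∈ K, G.Adj u v}

end Stab

namespace Stab

/-- `ℓ_{K,w}`: optimal value of the LP that minimizes
`∑_{v ∈ V(K) ∪ N(K)} y_v − (|V(K)|−1)/2 − |N(K)|/2` subject to `y_i + y_j ≥ 1` on edges
inside `V(K) ∪ N(K)`, `y ≥ 1/2` on `N(K)`, `y ≥ 0` on `V(K)` and `y_w = 0`. -/
def ellKw {V : Type*} [Fintype V] (G : SimpleGraph V) (K : Set V) (w : V) : ℝ :=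
  sInf {x | ∃ y : V → ℝ,
    (∀ u v : V, G.Adj u v → u ∈ K ∪ nbhd G K → v ∈ K ∪ nbhd G K → 1 ≤ y u + y v) ∧
    (∀ i ∈ nbhd G K, 1 / 2 ≤ y i) ∧
    (∀ i ∈ K, 0 ≤ y i) ∧
    y w = 0 ∧
    x = (∑ v ∈ Finset.univ.filter (· ∈ K ∪ nbhd G K), y v)
        - ((Nat.card ↥K : ℝ) - 1) / 2 - (Nat.card ↥(nbhd G K) : ℝ) / 2}

/-- `f(K) = min_{w ∈ V(K)} ℓ_{K,w}` -/
def fK {V : Type*} [Fintype V] (G : SimpleGraph V) (K : Set V) : ℝ :=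
  sInf {x | ∃ w ∈ K, x = ellKw G K w}

/-- `r`: the number of connected components of `G[X]` minus `|Y|` -/
def rGE {V : Type*} [Fintype V] (G : SimpleGraph V) : ℝ :=
  (Nat.card {K : Set V // IsCompOf G (geX G) K} : ℝ) - (Nat.card ↥(geY G) : ℝ)

end Stab

namespace Stab

/-- vertices covered by `M` -/
def covS (M : Finset (Sym2 V)) : Set V := {v | ∃ e ∈ M, v ∈ e}

lemma exposed_iff_not_covS {M : Finset (Sym2 V)} {v : V} : Exposed M v ↔ v ∉ covS M := by
  simp [Exposed, covS]

lemma not_exposed_iff_covS {M : Finset (Sym2 V)} {v : V} : ¬ Exposed M v ↔ v ∈ covS M := by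
  rw [exposed_iff_not_covS]; tauto

lemma covS_mono {M M' : Finset (Sym2 V)} (h : M ⊆ M') : covS M ⊆ covS M' := by
  rintro v ⟨e, he, hv⟩; exact ⟨e, h he, hv⟩

lemma isMatching_subset {G : SimpleGraph V} {M M' : Finset (Sym2 V)} (h : M' ⊆ M)
    (hM : IsMatching G M) : IsMatching G M' :=
  ⟨fun e he => hM.1 e (h he), fun e he f hf hef v hv => hM.2 e (h he) f (h hf) hef v hv⟩

lemma IsMatching.edge_rep {G : SimpleGraph V} {M : Finset (Sym2 V)} (hM : IsMatching G M)
    {e : Sym2 V} (he : e ∈ M) {a : V} (ha : a ∈ e) :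
    ∃ b, e = s(a, b) ∧ G.Adj a b ∧ b ≠ a := by
  obtain ⟨b, rfl⟩ := Sym2.mem_iff_exists.mp ha
  have hadj : G.Adj a b := G.mem_edgeSet.mp (hM.1 _ he)
  exact ⟨b, rfl, hadj, hadj.ne'⟩

lemma IsMatching.unique {G : SimpleGraph V} {M : Finset (Sym2 V)} (hM : IsMatching G M)
    {e f : Sym2 V} {v : V} (he : e ∈ M) (hf : f ∈ M) (hv : v ∈ e) (hv' : v ∈ f) : e = f := by
  by_contra hne
  exact hM.2 e he f hf hne v hv hv'

lemma covS_insert [DecidableEq V] (a b : V) (M : Finset (Sym2 V)) :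
    covS (insert s(a,b) M) = covS M ∪ {a, b} := by
  ext x
  simp only [covS, Set.mem_setOf_eq, Finset.mem_insert, Set.mem_union,
    Set.mem_insert_iff, Set.mem_singleton_iff]
  constructor
  · rintro ⟨e, (rfl | he), hx⟩
    · rcases Sym2.mem_iff.mp hx with rfl | rfl
      · exact Or.inr (Or.inl rfl)
      · exact Or.inr (Or.inr rfl)
    · exact Or.inl ⟨e, he, hx⟩
  · rintro (⟨e, he, hx⟩ | rfl | rfl)
    · exact ⟨e, Or.inr he, hx⟩
    · exact ⟨s(x,b), Or.inl rfl, by simp⟩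
    · exact ⟨s(a,x), Or.inl rfl, by simp⟩

lemma IsMatching.covS_erase [DecidableEq V] {G : SimpleGraph V} {M : Finset (Sym2 V)}
    (hM : IsMatching G M) {a b : V} (he : s(a,b) ∈ M) :
    covS (M.erase s(a,b)) = covS M \ {a, b} := by
  ext x
  simp only [covS, Set.mem_setOf_eq, Finset.mem_erase, Set.mem_diff,
    Set.mem_insert_iff, Set.mem_singleton_iff]
  constructor
  · rintro ⟨e, ⟨hne, heM⟩, hx⟩
    refine ⟨⟨e, heM, hx⟩, ?_⟩
    rintro (rfl | rfl)
    · exact hne (hM.unique heM he hx (by simp))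
    · exact hne (hM.unique heM he hx (by simp))
  · rintro ⟨⟨e, heM, hx⟩, hne⟩
    refine ⟨e, ⟨?_, heM⟩, hx⟩
    rintro rfl
    rcases Sym2.mem_iff.mp hx with rfl | rfl
    · exact hne (Or.inl rfl)
    · exact hne (Or.inr rfl)

lemma IsMatching.insert_edge [DecidableEq V] {G : SimpleGraph V} {M : Finset (Sym2 V)}
    (hM : IsMatching G M) {a b : V} (hab : G.Adj a b) (ha : a ∉ covS M) (hb : b ∉ covS M) :
    IsMatching G (insert s(a,b) M) := by
  have key : ∀ f ∈ M, ∀ v : V, v ∈ s(a,b) → v ∉ f := by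
    intro f hf v hv hvf
    rcases Sym2.mem_iff.mp hv with rfl | rfl
    · exact ha ⟨f, hf, hvf⟩
    · exact hb ⟨f, hf, hvf⟩
  constructor
  · intro e he
    rcases Finset.mem_insert.mp he with rfl | he
    · exact G.mem_edgeSet.mpr hab
    · exact hM.1 e he
  · intro e he f hf hef v hv
    rcases Finset.mem_insert.mp he with rfl | he
    · rcases Finset.mem_insert.mp hf with rfl | hf
      · exact absurd rfl hef
      · exact key f hf v hv
    · rcases Finset.mem_insert.mp hf with rfl | hf
      · intro hvf
        exact key e he v hvf hv
      · exact hM.2 e he f hf hef v hv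

lemma edge_rep' {G : SimpleGraph V} {e : Sym2 V} (he : e ∈ G.edgeSet) :
    ∃ a b : V, G.Adj a b ∧ e = s(a,b) := by
  induction e using Sym2.ind with
  | _ a b => exact ⟨a, b, G.mem_edgeSet.mp he, rfl⟩

lemma mem_covS_of_edge {M : Finset (Sym2 V)} {e : Sym2 V} (he : e ∈ M) {v : V} (hv : v ∈ e) :
    v ∈ covS M := ⟨e, he, hv⟩

lemma pd [DecidableEq V] (G : SimpleGraph V) :
    ∀ n : ℕ, ∀ P Q : Finset (Sym2 V), P.card + Q.card ≤ n →
    IsMatching G P → IsMatching G Q → ∀ a, a ∈ covS P → Exposed Q a →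
    (∃ z, z ≠ a ∧ Exposed Q z ∧ z ∈ covS P ∧
      (∃ R1, IsMatching G R1 ∧ (∀ e ∈ R1, e ∈ P ∨ e ∈ Q) ∧ R1.card = Q.card + 1 ∧
        covS R1 = covS Q ∪ {a, z}) ∧
      (∃ R2, IsMatching G R2 ∧ (∀ e ∈ R2, e ∈ P ∨ e ∈ Q) ∧ R2.card + 1 = P.card ∧
        covS R2 = covS P \ {a, z})) ∨
    (∃ t, t ≠ a ∧ Exposed P t ∧ t ∈ covS Q ∧
      (∃ R3, IsMatching G R3 ∧ (∀ e ∈ R3, e ∈ P ∨ e ∈ Q) ∧ (∀ e, e ∈ P → e ∈ Q → e ∈ R3) ∧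
        (∃ q ∈ Q, q ∉ P ∧ q ∈ R3) ∧ R3.card = P.card ∧ covS R3 = (covS P \ {a}) ∪ {t}) ∧
      (∃ R4, IsMatching G R4 ∧ (∀ e ∈ R4, e ∈ P ∨ e ∈ Q) ∧ R4.card = Q.card ∧
        covS R4 = (covS Q ∪ {a}) \ {t})) := by
  intro n
  induction n with
  | zero =>
    intro P Q hc hP hQ a ha hQa
    obtain ⟨e, he, _⟩ := ha
    have := Finset.card_pos.mpr ⟨e, he⟩
    omega
  | succ n ih =>
    intro P Q hc hP hQ a ha hQa
    obtain ⟨e0, he0, hae0⟩ := ha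
    obtain ⟨b, he0eq, hab, hba⟩ := hP.edge_rep he0 hae0
    subst he0eq
    have haQ : a ∉ covS Q := exposed_iff_not_covS.mp hQa
    have hbP : b ∈ covS P := ⟨_, he0, by simp⟩
    have he0Q : s(a,b) ∉ Q := fun h => haQ ⟨_, h, by simp⟩
    by_cases hbQ : b ∈ covS Q
    case neg =>
      left
      refine ⟨b, hba, exposed_iff_not_covS.mpr hbQ, hbP, ?_, ?_⟩
      · refine ⟨insert s(a,b) Q, hQ.insert_edge hab haQ hbQ, ?_, ?_, ?_⟩
        · intro e he
          rcases Finset.mem_insert.mp he with rfl | he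
          · exact Or.inl he0
          · exact Or.inr he
        · rw [Finset.card_insert_of_notMem he0Q]
        · rw [covS_insert]
      · refine ⟨P.erase s(a,b), isMatching_subset (Finset.erase_subset _ _) hP, ?_, ?_, ?_⟩
        · intro e he
          exact Or.inl (Finset.mem_of_mem_erase he)
        · exact Finset.card_erase_add_one he0
        · exact hP.covS_erase he0
    case pos =>
      obtain ⟨e1, he1, hbe1⟩ := hbQ
      obtain ⟨c, he1eq, hbc, hcb⟩ := hQ.edge_rep he1 hbe1
      subst he1eq
      have hbQcov : b ∈ covS Q := ⟨_, he1, by simp⟩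
      have hccovQ : c ∈ covS Q := ⟨_, he1, by simp⟩
      have hca : c ≠ a := fun h => haQ ⟨_, he1, by simp [h]⟩
      have he1P : s(b,c) ∉ P := by
        intro h
        have heq := hP.unique h he0 (Sym2.mem_mk_left b c) (Sym2.mem_mk_right a b)
        rcases Sym2.eq_iff.mp heq with ⟨h1, h2⟩ | ⟨h1, h2⟩
        · exact hba.symm (h1 ▸ rfl)
        · exact hca h2
      have he0ne1 : s(a,b) ≠ s(b,c) := fun h => he0Q (h ▸ he1)
      by_cases hcP : c ∈ covS P
      case neg =>
        -- Outcome B, path of length 2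
        right
        refine ⟨c, hca, exposed_iff_not_covS.mpr hcP, hccovQ, ?_, ?_⟩
        · -- R3
          have hPe : IsMatching G (P.erase s(a,b)) :=
            isMatching_subset (Finset.erase_subset _ _) hP
          have hcovPe : covS (P.erase s(a,b)) = covS P \ {a, b} := hP.covS_erase he0
          have hbnot : b ∉ covS (P.erase s(a,b)) := by
            rw [hcovPe]; rintro ⟨_, h⟩; exact h (Or.inr rfl)
          have hcnot : c ∉ covS (P.erase s(a,b)) := by
            rw [hcovPe]; rintro ⟨h, _⟩; exact hcP h
          have hnotmem : s(b,c) ∉ P.erase s(a,b) := fun h => he1P (Finset.mem_of_mem_erase h)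
          refine ⟨insert s(b,c) (P.erase s(a,b)), hPe.insert_edge hbc hbnot hcnot, ?_, ?_, ?_, ?_, ?_⟩
          · intro e he
            rcases Finset.mem_insert.mp he with rfl | he
            · exact Or.inr he1
            · exact Or.inl (Finset.mem_of_mem_erase he)
          · intro e heP heQ
            have hne : e ≠ s(a,b) := fun h => he0Q (h ▸ heQ)
            exact Finset.mem_insert_of_mem (Finset.mem_erase.mpr ⟨hne, heP⟩)
          · exact ⟨s(b,c), he1, he1P, Finset.mem_insert_self _ _⟩
          · rw [Finset.card_insert_of_notMem hnotmem]
            exact Finset.card_erase_add_one he0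
          · rw [covS_insert, hcovPe]
            ext x
            simp only [Set.mem_union, Set.mem_diff, Set.mem_insert_iff, Set.mem_singleton_iff]
            constructor
            · rintro (⟨hx, hne⟩ | rfl | rfl)
              · exact Or.inl ⟨hx, fun h => hne (Or.inl h)⟩
              · exact Or.inl ⟨hbP, hba⟩
              · exact Or.inr rfl
            · rintro (⟨hx, hne⟩ | rfl)
              · by_cases hxb : x = b
                · exact Or.inr (Or.inl hxb)
                · exact Or.inl ⟨hx, by rintro (h | h); exact hne h; exact hxb h⟩
              · exact Or.inr (Or.inr rfl)
        · -- R4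
          have hQe : IsMatching G (Q.erase s(b,c)) :=
            isMatching_subset (Finset.erase_subset _ _) hQ
          have hcovQe : covS (Q.erase s(b,c)) = covS Q \ {b, c} := hQ.covS_erase he1
          have hanot : a ∉ covS (Q.erase s(b,c)) := by
            rw [hcovQe]; rintro ⟨h, _⟩; exact haQ h
          have hbnot : b ∉ covS (Q.erase s(b,c)) := by
            rw [hcovQe]; rintro ⟨_, h⟩; exact h (Or.inl rfl)
          have hnotmem : s(a,b) ∉ Q.erase s(b,c) := fun h => he0Q (Finset.mem_of_mem_erase h)
          refine ⟨insert s(a,b) (Q.erase s(b,c)), hQe.insert_edge hab hanot hbnot, ?_, ?_, ?_⟩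
          · intro e he
            rcases Finset.mem_insert.mp he with rfl | he
            · exact Or.inl he0
            · exact Or.inr (Finset.mem_of_mem_erase he)
          · rw [Finset.card_insert_of_notMem hnotmem]
            exact Finset.card_erase_add_one he1
          · rw [covS_insert, hcovQe]
            ext x
            simp only [Set.mem_union, Set.mem_diff, Set.mem_insert_iff, Set.mem_singleton_iff]
            constructor
            · rintro (⟨hx, hne⟩ | rfl | rfl)
              · exact ⟨Or.inl hx, fun h => hne (Or.inr h)⟩
              · exact ⟨Or.inr rfl, fun h => hca h.symm⟩
              · exact ⟨Or.inl hbQcov, fun h => hcb h.symm⟩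
            · rintro ⟨hx | rfl, hne⟩
              · by_cases hxb : x = b
                · exact Or.inr (Or.inr hxb)
                · exact Or.inl ⟨hx, by rintro (h | h); exact hxb h; exact hne h⟩
              · exact Or.inr (Or.inl rfl)
      case pos =>
        -- recursive case
        set P' := P.erase s(a,b) with hP'def
        set Q' := Q.erase s(b,c) with hQ'def
        have hP' : IsMatching G P' := isMatching_subset (Finset.erase_subset _ _) hP
        have hQ' : IsMatching G Q' := isMatching_subset (Finset.erase_subset _ _) hQ
        have hcovP' : covS P' = covS P \ {a, b} := hP.covS_erase he0
        have hcovQ' : covS Q' = covS Q \ {b, c} := hQ.covS_erase he1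
        have hcP'mem : c ∈ covS P' := by
          rw [hcovP']
          exact ⟨hcP, by rintro (h | h); exact hca h; exact hcb h⟩
        have hcQ'exp : Exposed Q' c := by
          rw [exposed_iff_not_covS, hcovQ']
          rintro ⟨_, h⟩; exact h (Or.inr rfl)
        have hcards : P'.card + Q'.card ≤ n := by
          have h1 := Finset.card_erase_add_one he0
          have h2 := Finset.card_erase_add_one he1
          rw [← hP'def] at h1
          rw [← hQ'def] at h2
          omega
        have haP' : a ∉ covS P' := by rw [hcovP']; rintro ⟨_, h⟩; exact h (Or.inl rfl)
        have hbP' : b ∉ covS P' := by rw [hcovP']; rintro ⟨_, h⟩; exact h (Or.inr rfl)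
        have hbQ' : b ∉ covS Q' := by rw [hcovQ']; rintro ⟨_, h⟩; exact h (Or.inl rfl)
        have hcQ' : c ∉ covS Q' := by rw [hcovQ']; rintro ⟨_, h⟩; exact h (Or.inr rfl)
        have haQ' : a ∉ covS Q' := fun h => haQ (covS_mono (Finset.erase_subset _ _) h)
        rcases ih P' Q' hcards hP' hQ' c hcP'mem hcQ'exp with
          ⟨z, hzc, hzQ'exp, hzP', hR1', hR2'⟩ | ⟨t, htc, htP'exp, htQ', hR3', hR4'⟩
        · -- reconstruct LEFT
          left
          have hz' := hzP'
          rw [hcovP'] at hz'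
          obtain ⟨hzP, hznab⟩ := hz'
          have hza : z ≠ a := fun h => hznab (Or.inl h)
          have hzb : z ≠ b := fun h => hznab (Or.inr h)
          have hzQexp : Exposed Q z := by
            rw [exposed_iff_not_covS]
            intro hzQ
            exact (exposed_iff_not_covS.mp hzQ'exp)
              (by rw [hcovQ']; exact ⟨hzQ, by rintro (h | h); exact hzb h; exact hzc h⟩)
          refine ⟨z, hza, hzQexp, hzP, ?_, ?_⟩
          · obtain ⟨R1', hm, hsub, hcard, hcov⟩ := hR1'
            have hanot : a ∉ covS R1' := by
              rw [hcov]
              rintro (h | h | h)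
              · exact haQ' h
              · exact hca h.symm
              · exact hza h.symm
            have hbnot : b ∉ covS R1' := by
              rw [hcov]
              rintro (h | h | h)
              · exact hbQ' h
              · exact hcb h.symm
              · exact hzb h.symm
            have hnotmem : s(a,b) ∉ R1' := fun h => hanot ⟨_, h, by simp⟩
            refine ⟨insert s(a,b) R1', hm.insert_edge hab hanot hbnot, ?_, ?_, ?_⟩
            · intro e he
              rcases Finset.mem_insert.mp he with rfl | he
              · exact Or.inl he0
              · rcases hsub e he with h | h
                · exact Or.inl (Finset.mem_of_mem_erase h)
                · exact Or.inr (Finset.mem_of_mem_erase h)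
            · rw [Finset.card_insert_of_notMem hnotmem, hcard]
              have h2 := Finset.card_erase_add_one he1
              rw [← hQ'def] at h2
              omega
            · rw [covS_insert, hcov, hcovQ']
              ext x
              simp only [Set.mem_union, Set.mem_diff, Set.mem_insert_iff, Set.mem_singleton_iff]
              constructor
              · rintro ((⟨hx, _⟩ | rfl | rfl) | rfl | rfl)
                · exact Or.inl hx
                · exact Or.inl hccovQ
                · exact Or.inr (Or.inr rfl)
                · exact Or.inr (Or.inl rfl)
                · exact Or.inl hbQcov
              · rintro (hx | rfl | rfl)
                · by_cases hxb : x = b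
                  · exact Or.inr (Or.inr hxb)
                  · by_cases hxc : x = c
                    · exact Or.inl (Or.inr (Or.inl hxc))
                    · exact Or.inl (Or.inl ⟨hx, by rintro (h | h); exact hxb h; exact hxc h⟩)
                · exact Or.inr (Or.inl rfl)
                · exact Or.inl (Or.inr (Or.inr rfl))
          · obtain ⟨R2', hm, hsub, hcard, hcov⟩ := hR2'
            have hbnot : b ∉ covS R2' := by
              rw [hcov, hcovP']
              rintro ⟨⟨_, h⟩, _⟩; exact h (Or.inr rfl)
            have hcnot : c ∉ covS R2' := by
              rw [hcov]
              rintro ⟨_, h⟩; exact h (Or.inl rfl)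
            have hnotmem : s(b,c) ∉ R2' := fun h => hbnot ⟨_, h, by simp⟩
            refine ⟨insert s(b,c) R2', hm.insert_edge hbc hbnot hcnot, ?_, ?_, ?_⟩
            · intro e he
              rcases Finset.mem_insert.mp he with rfl | he
              · exact Or.inr he1
              · rcases hsub e he with h | h
                · exact Or.inl (Finset.mem_of_mem_erase h)
                · exact Or.inr (Finset.mem_of_mem_erase h)
            · rw [Finset.card_insert_of_notMem hnotmem]
              have h1 := Finset.card_erase_add_one he0
              rw [← hP'def] at h1
              omega
            · rw [covS_insert, hcov, hcovP']
              ext x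
              simp only [Set.mem_union, Set.mem_diff, Set.mem_insert_iff, Set.mem_singleton_iff]
              constructor
              · rintro (⟨⟨hx, hne1⟩, hne2⟩ | rfl | rfl)
                · exact ⟨hx, by rintro (h | h); exact hne1 (Or.inl h); exact hne2 (Or.inr h)⟩
                · exact ⟨hbP, by rintro (h | h); exact hba h; exact hzb.symm h⟩
                · exact ⟨hcP, by rintro (h | h); exact hca h; exact hzc h.symm⟩
              · rintro ⟨hx, hne⟩
                by_cases hxb : x = b
                · exact Or.inr (Or.inl hxb)
                · by_cases hxc : x = c
                  · exact Or.inr (Or.inr hxc)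
                  · refine Or.inl ⟨⟨hx, ?_⟩, ?_⟩
                    · rintro (h | h); exact hne (Or.inl h); exact hxb h
                    · rintro (h | h); exact hxc h; exact hne (Or.inr h)
        · -- reconstruct RIGHT
          right
          have ht' := htQ'
          rw [hcovQ'] at ht'
          obtain ⟨htQ, htnbc⟩ := ht'
          have htb : t ≠ b := fun h => htnbc (Or.inl h)
          have hta : t ≠ a := fun h => haQ (h ▸ htQ)
          have htPexp : Exposed P t := by
            rw [exposed_iff_not_covS]
            intro htP
            exact (exposed_iff_not_covS.mp htP'exp)
              (by rw [hcovP']; exact ⟨htP, by rintro (h | h); exact hta h; exact htb h⟩)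
          refine ⟨t, hta, htPexp, htQ, ?_, ?_⟩
          · obtain ⟨R3', hm, hsub, hint, _hq, hcard, hcov⟩ := hR3'
            have hbnot : b ∉ covS R3' := by
              rw [hcov, hcovP']
              rintro (⟨⟨_, h⟩, _⟩ | h)
              · exact h (Or.inr rfl)
              · exact htb h.symm
            have hcnot : c ∉ covS R3' := by
              rw [hcov]
              rintro (⟨_, h⟩ | h)
              · exact h rfl
              · exact htc h.symm
            have hnotmem : s(b,c) ∉ R3' := fun h => hbnot ⟨_, h, by simp⟩
            refine ⟨insert s(b,c) R3', hm.insert_edge hbc hbnot hcnot, ?_, ?_, ?_, ?_, ?_⟩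
            · intro e he
              rcases Finset.mem_insert.mp he with rfl | he
              · exact Or.inr he1
              · rcases hsub e he with h | h
                · exact Or.inl (Finset.mem_of_mem_erase h)
                · exact Or.inr (Finset.mem_of_mem_erase h)
            · intro e heP heQ
              have h0 : e ≠ s(a,b) := fun h => he0Q (h ▸ heQ)
              have h1 : e ≠ s(b,c) := fun h => he1P (h ▸ heP)
              exact Finset.mem_insert_of_mem
                (hint e (Finset.mem_erase.mpr ⟨h0, heP⟩) (Finset.mem_erase.mpr ⟨h1, heQ⟩))
            · exact ⟨s(b,c), he1, he1P, Finset.mem_insert_self _ _⟩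
            · rw [Finset.card_insert_of_notMem hnotmem, hcard]
              exact Finset.card_erase_add_one he0
            · rw [covS_insert, hcov, hcovP']
              ext x
              simp only [Set.mem_union, Set.mem_diff, Set.mem_insert_iff, Set.mem_singleton_iff]
              constructor
              · rintro ((⟨⟨hx, hne1⟩, _⟩ | rfl) | rfl | rfl)
                · exact Or.inl ⟨hx, fun h => hne1 (Or.inl h)⟩
                · exact Or.inr rfl
                · exact Or.inl ⟨hbP, hba⟩
                · exact Or.inl ⟨hcP, hca⟩
              · rintro (⟨hx, hne⟩ | rfl)
                · by_cases hxb : x = b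
                  · exact Or.inr (Or.inl hxb)
                  · by_cases hxc : x = c
                    · exact Or.inr (Or.inr hxc)
                    · refine Or.inl (Or.inl ⟨⟨hx, ?_⟩, hxc⟩)
                      rintro (h | h); exact hne h; exact hxb h
                · exact Or.inl (Or.inr rfl)
          · obtain ⟨R4', hm, hsub, hcard, hcov⟩ := hR4'
            have hanot : a ∉ covS R4' := by
              rw [hcov, hcovQ']
              rintro ⟨(⟨h, _⟩ | h), _⟩
              · exact haQ h
              · exact hca h.symm
            have hbnot : b ∉ covS R4' := by
              rw [hcov, hcovQ']
              rintro ⟨(⟨_, h⟩ | h), _⟩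
              · exact h (Or.inl rfl)
              · exact hcb h.symm
            have hnotmem : s(a,b) ∉ R4' := fun h => hanot ⟨_, h, by simp⟩
            refine ⟨insert s(a,b) R4', hm.insert_edge hab hanot hbnot, ?_, ?_, ?_⟩
            · intro e he
              rcases Finset.mem_insert.mp he with rfl | he
              · exact Or.inl he0
              · rcases hsub e he with h | h
                · exact Or.inl (Finset.mem_of_mem_erase h)
                · exact Or.inr (Finset.mem_of_mem_erase h)
            · rw [Finset.card_insert_of_notMem hnotmem, hcard]
              exact Finset.card_erase_add_one he1
            · rw [covS_insert, hcov, hcovQ']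
              ext x
              simp only [Set.mem_union, Set.mem_diff, Set.mem_insert_iff, Set.mem_singleton_iff]
              constructor
              · rintro (⟨⟨hx, _⟩ | rfl, hnet⟩ | rfl | rfl)
                · exact ⟨Or.inl hx, hnet⟩
                · exact ⟨Or.inl hccovQ, hnet⟩
                · exact ⟨Or.inr rfl, Ne.symm hta⟩
                · exact ⟨Or.inl hbQcov, Ne.symm htb⟩
              · rintro ⟨hx | rfl, hnet⟩
                · by_cases hxb : x = b
                  · exact Or.inr (Or.inr hxb)
                  · by_cases hxc : x = c
                    · exact Or.inl ⟨Or.inr hxc, hnet⟩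
                    · refine Or.inl ⟨Or.inl ⟨hx, ?_⟩, hnet⟩
                      rintro (h | h); exact hxb h; exact hxc h
                · exact Or.inr (Or.inl rfl)

lemma exposed_mono {M' M : Finset (Sym2 V)} {v : V} (h : M' ⊆ M) (hE : Exposed M v) :
    Exposed M' v := fun e he => hE e (h he)

section NuA

variable [Fintype V] [DecidableEq V] (G : SimpleGraph V)

/-- matchings of `G` with all vertices inside `A` -/
def MatchIn (A : Set V) (M : Finset (Sym2 V)) : Prop :=
  IsMatching G M ∧ ∀ e ∈ M, ∀ v ∈ e, v ∈ A

/-- maximum size of a matching inside `A` -/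
def nuA (A : Set V) : ℕ := sSup {n | ∃ M, MatchIn G A M ∧ M.card = n}

def InessIn (A : Set V) (v : V) : Prop :=
  v ∈ A ∧ ∃ M, MatchIn G A M ∧ M.card = nuA G A ∧ Exposed M v

variable {G}

lemma nuA_bdd (A : Set V) : BddAbove {n | ∃ M, MatchIn G A M ∧ M.card = n} :=
  ⟨Fintype.card (Sym2 V), fun n ⟨M, _, hn⟩ => hn ▸ Finset.card_le_univ M⟩

lemma nuA_nonempty (A : Set V) : {n | ∃ M, MatchIn G A M ∧ M.card = n}.Nonempty :=
  ⟨0, ∅, ⟨⟨fun e he => absurd he (Finset.notMem_empty e),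
    fun e he => absurd he (Finset.notMem_empty e)⟩,
    fun e he => absurd he (Finset.notMem_empty e)⟩, rfl⟩

lemma le_nuA {A : Set V} {M : Finset (Sym2 V)} (h : MatchIn G A M) : M.card ≤ nuA G A :=
  le_csSup (nuA_bdd A) ⟨M, h, rfl⟩

lemma exists_nuA_max (A : Set V) : ∃ M, MatchIn G A M ∧ M.card = nuA G A := by
  have := Nat.sSup_mem (nuA_nonempty (G := G) A) (nuA_bdd A)
  exact this

lemma matchIn_mono {A B : Set V} {M : Finset (Sym2 V)} (hAB : A ⊆ B) (h : MatchIn G A M) :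
    MatchIn G B M := ⟨h.1, fun e he v hv => hAB (h.2 e he v hv)⟩

lemma covS_subset_of_matchIn {A : Set V} {M : Finset (Sym2 V)} (h : MatchIn G A M) :
    covS M ⊆ A := by rintro v ⟨e, he, hv⟩; exact h.2 e he v hv

lemma matchIn_erase_delete {A : Set V} {M : Finset (Sym2 V)} (hM : MatchIn G A M)
    {u b : V} (he : s(u,b) ∈ M) : MatchIn G (A \ {u}) (M.erase s(u,b)) := by
  refine ⟨isMatching_subset (Finset.erase_subset _ _) hM.1, ?_⟩
  intro f hf v hv
  have hfM := Finset.mem_of_mem_erase hf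
  refine ⟨hM.2 f hfM v hv, ?_⟩
  intro hvu
  have hveq : v = u := hvu
  rw [hveq] at hv
  exact (Finset.mem_erase.mp hf).1 (hM.1.unique hfM he hv (Sym2.mem_mk_left u b))

lemma nuA_delete {A : Set V} {u : V} (huA : u ∈ A) (hess : ¬ InessIn G A u) :
    nuA G (A \ {u}) + 1 = nuA G A := by
  obtain ⟨M, hM, hMcard⟩ := exists_nuA_max (G := G) A
  have hucov : u ∈ covS M := by
    by_contra h
    exact hess ⟨huA, M, hM, hMcard, exposed_iff_not_covS.mpr h⟩
  obtain ⟨e, he, hue⟩ := hucov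
  obtain ⟨b, rfl, _, _⟩ := hM.1.edge_rep he hue
  have h1 : MatchIn G (A \ {u}) (M.erase s(u,b)) := matchIn_erase_delete hM he
  have hle1 : nuA G A ≤ nuA G (A \ {u}) + 1 := by
    have := le_nuA h1
    have h2 := Finset.card_erase_add_one he
    omega
  have hle2 : nuA G (A \ {u}) + 1 ≤ nuA G A := by
    obtain ⟨M', hM', hM'card⟩ := exists_nuA_max (G := G) (A \ {u})
    have hsub : MatchIn G A M' := matchIn_mono Set.diff_subset hM'
    have hlt : M'.card < nuA G A := by
      rcases lt_or_eq_of_le (le_nuA hsub) with h | h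
      · exact h
      · exfalso
        apply hess
        refine ⟨huA, M', hsub, h, exposed_iff_not_covS.mpr fun hc => ?_⟩
        exact (covS_subset_of_matchIn hM' hc).2 rfl
    omega
  omega

lemma iness_delete_easy {A : Set V} {u v : V} (huA : u ∈ A) (hess : ¬ InessIn G A u)
    (hv : InessIn G A v) (hvu : v ≠ u) : InessIn G (A \ {u}) v := by
  obtain ⟨hvA, M, hM, hMcard, hMv⟩ := hv
  have hucov : u ∈ covS M := by
    by_contra h
    exact hess ⟨huA, M, hM, hMcard, exposed_iff_not_covS.mpr h⟩
  obtain ⟨e, he, hue⟩ := hucov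
  obtain ⟨b, rfl, _, _⟩ := hM.1.edge_rep he hue
  have h1 : MatchIn G (A \ {u}) (M.erase s(u,b)) := matchIn_erase_delete hM he
  refine ⟨⟨hvA, hvu⟩, M.erase s(u,b), h1, ?_, exposed_mono (Finset.erase_subset _ _) hMv⟩
  have h2 := Finset.card_erase_add_one he
  have h3 := nuA_delete huA hess
  omega

lemma iness_delete_hard {A : Set V} {u w v : V} (huA : u ∈ A) (hess : ¬ InessIn G A u)
    (hw : InessIn G A w) (hadj : G.Adj u w) (hv : InessIn G (A \ {u}) v) : InessIn G A v := by
  obtain ⟨hvA', M', hM', hM'card, hM'v⟩ := hv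
  have hvA : v ∈ A := hvA'.1
  have hvu : v ≠ u := hvA'.2
  obtain ⟨hwA, Mw, hMw, hMwcard, hMww⟩ := hw
  by_cases hMwv : Exposed Mw v
  · exact ⟨hvA, Mw, hMw, hMwcard, hMwv⟩
  have hvw : v ≠ w := fun h => hMwv (h ▸ hMww)
  have hvcov : v ∈ covS Mw := not_exposed_iff_covS.mp hMwv
  have hwMw : w ∉ covS Mw := exposed_iff_not_covS.mp hMww
  have huM' : u ∉ covS M' := fun h => (covS_subset_of_matchIn hM' h).2 rfl
  rcases pd G (Mw.card + M'.card) Mw M' le_rfl hMw.1 hM'.1 v hvcov hM'v with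
    ⟨z, hza, _, hzP, hR1, hR2⟩ | ⟨t, hta, _, _, hR3, _⟩
  · by_cases hzu : z = u
    · subst hzu
      obtain ⟨R2, hm, hsub, hcard, hcov⟩ := hR2
      have hu2 : z ∉ covS R2 := by rw [hcov]; rintro ⟨_, h⟩; exact h (Or.inr rfl)
      have hw2 : w ∉ covS R2 := by rw [hcov]; rintro ⟨h, _⟩; exact hwMw h
      have hnm : s(z,w) ∉ R2 := fun h => hu2 ⟨_, h, by simp⟩
      refine ⟨hvA, insert s(z,w) R2, ⟨hm.insert_edge hadj hu2 hw2, ?_⟩, ?_, ?_⟩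
      · intro f hf x hx
        rcases Finset.mem_insert.mp hf with rfl | hf
        · rcases Sym2.mem_iff.mp hx with rfl | rfl
          · exact huA
          · exact hwA
        · rcases hsub f hf with h | h
          · exact hMw.2 f h x hx
          · exact (hM'.2 f h x hx).1
      · rw [Finset.card_insert_of_notMem hnm]
        omega
      · rw [exposed_iff_not_covS, covS_insert, hcov]
        rintro (⟨_, h⟩ | h | h)
        · exact h (Or.inl rfl)
        · exact hvu h
        · exact hvw h
    · exfalso
      obtain ⟨R1, hm, hsub, hcard, hcov⟩ := hR1
      have hmatch : MatchIn G (A \ {u}) R1 := by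
        refine ⟨hm, ?_⟩
        intro f hf x hx
        have hxcov : x ∈ covS R1 := ⟨f, hf, hx⟩
        rw [hcov] at hxcov
        constructor
        · rcases hxcov with h | h | h
          · exact (covS_subset_of_matchIn hM' h).1
          · exact h ▸ hvA
          · exact h ▸ covS_subset_of_matchIn (matchIn_mono (le_refl A) hMw) hzP
        · intro hxu
          have hxu' : x = u := hxu
          subst hxu'
          rcases hxcov with h | h | h
          · exact huM' h
          · exact hvu h.symm
          · exact hzu h.symm
      have := le_nuA hmatch
      omega
  · obtain ⟨R3, hm, hsub, _, _, hcard, hcov⟩ := hR3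
    refine ⟨hvA, R3, ⟨hm, ?_⟩, by omega, ?_⟩
    · intro f hf x hx
      rcases hsub f hf with h | h
      · exact hMw.2 f h x hx
      · exact (hM'.2 f h x hx).1
    · rw [exposed_iff_not_covS, hcov]
      rintro (⟨h1, h2⟩ | h)
      · exact h2 rfl
      · exact hta h.symm

end NuA

section Bridge

variable [Fintype V] [DecidableEq V] {G : SimpleGraph V}

lemma matchIn_univ_iff {M : Finset (Sym2 V)} : MatchIn G Set.univ M ↔ IsMatching G M :=
  ⟨fun h => h.1, fun h => ⟨h, fun _ _ _ _ => Set.mem_univ _⟩⟩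

lemma nuA_univ : nuA G Set.univ = nu G := by
  unfold nuA nu
  congr 1
  ext n
  simp only [Set.mem_setOf_eq]
  constructor
  · rintro ⟨M, hM, hn⟩; exact ⟨M, matchIn_univ_iff.mp hM, hn⟩
  · rintro ⟨M, hM, hn⟩; exact ⟨M, matchIn_univ_iff.mpr hM, hn⟩

lemma iness_univ_iff {v : V} : InessIn G Set.univ v ↔ Inessential G v := by
  constructor
  · rintro ⟨-, M, hM, hcard, hexp⟩
    refine ⟨M, ⟨hM.1, fun M' hM' => ?_⟩, hexp⟩
    rw [hcard, nuA_univ]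
    rw [← nuA_univ]
    exact le_nuA (matchIn_univ_iff.mpr hM')
  · rintro ⟨M, ⟨hm, hmax⟩, hexp⟩
    refine ⟨Set.mem_univ v, M, matchIn_univ_iff.mpr hm, ?_, hexp⟩
    refine le_antisymm (le_nuA (matchIn_univ_iff.mpr hm)) ?_
    refine csSup_le (nuA_nonempty _) ?_
    rintro n ⟨M', hM', rfl⟩
    exact hmax M' (matchIn_univ_iff.mp hM')

lemma del_iter (hG : True) :
    ∀ T : Finset V, ↑T ⊆ geY G → ∀ v : V, (InessIn G (Set.univ \ ↑T) v ↔ v ∈ geX G) := by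
  intro T
  induction T using Finset.induction_on with
  | empty =>
    intro _ v
    simp only [Finset.coe_empty, Set.diff_empty]
    exact iness_univ_iff
  | @insert u T hu ihT =>
    intro hsub v
    have hT : (↑T : Set V) ⊆ geY G := by
      intro x hx
      exact hsub (by exact_mod_cast Finset.mem_insert_of_mem (by exact_mod_cast hx))
    have hu_in : u ∈ geY G := hsub (by simp)
    obtain ⟨huX, w, hwX, hwadj⟩ := hu_in
    have huA : u ∈ Set.univ \ (↑T : Set V) :=
      ⟨trivial, fun h => hu (by exact_mod_cast h)⟩
    have hess : ¬ InessIn G (Set.univ \ (↑T : Set V)) u := fun h => huX ((ihT hT u).mp h)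
    have hwA : InessIn G (Set.univ \ (↑T : Set V)) w := (ihT hT w).mpr hwX
    have hset : Set.univ \ (↑(insert u T) : Set V) = (Set.univ \ (↑T : Set V)) \ {u} := by
      ext x
      simp only [Finset.coe_insert, Set.mem_diff, Set.mem_univ, true_and,
        Set.mem_insert_iff, Set.mem_singleton_iff]
      tauto
    rw [hset]
    constructor
    · intro h
      exact (ihT hT v).mp (iness_delete_hard huA hess hwA hwadj.symm h)
    · intro hvX
      have hvu : v ≠ u := fun h => huX (h ▸ hvX)
      exact iness_delete_easy huA hess ((ihT hT v).mpr hvX) hvu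

lemma univ_diff_Y (hZ : geZ G = ∅) : Set.univ \ (↑((geY G).toFinset) : Set V) = geX G := by
  ext x
  simp only [Set.mem_diff, Set.mem_univ, true_and, Set.coe_toFinset]
  constructor
  · intro hxY
    by_contra hxX
    have : x ∈ geZ G := ⟨hxX, hxY⟩
    rw [hZ] at this
    exact this
  · intro hxX hxY
    exact hxY.1 hxX

lemma iness_X (hZ : geZ G = ∅) {v : V} (hv : v ∈ geX G) : InessIn G (geX G) v := by
  have := (del_iter trivial (geY G).toFinset (by rw [Set.coe_toFinset]) v).mpr hv
  rwa [univ_diff_Y hZ] at this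

end Bridge


section Comps

variable {G : SimpleGraph V}

/-- the restriction of `G` to a set of vertices, as a graph on `V` -/
def restrict (G : SimpleGraph V) (X : Set V) : SimpleGraph V where
  Adj a b := G.Adj a b ∧ a ∈ X ∧ b ∈ X
  symm := by refine ⟨?_⟩; rintro a b ⟨h, h1, h2⟩; exact ⟨h.symm, h2, h1⟩
  loopless := by refine ⟨?_⟩; rintro a ⟨h, _⟩; exact G.loopless.irrefl a h

/-- the connected component of `v` in `G[X]` -/
def comp (G : SimpleGraph V) (X : Set V) (v : V) : Set V :=
  {w | (restrict G X).Reachable v w}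

lemma mem_comp_self (X : Set V) (v : V) : v ∈ comp G X v := SimpleGraph.Reachable.refl v

lemma restrict_walk_end_mem {X : Set V} :
    ∀ {a b : V}, (restrict G X).Walk a b → a ∈ X → b ∈ X := by
  intro a b p
  induction p with
  | nil => exact id
  | cons h _ ih => exact fun _ => ih h.2.2

lemma comp_subset {X : Set V} {v : V} (hv : v ∈ X) : comp G X v ⊆ X := by
  intro w hw
  obtain ⟨p⟩ := hw
  exact restrict_walk_end_mem p hv

lemma comp_mem_trans {X : Set V} {v w x : V} (hw : w ∈ comp G X v) (hx : x ∈ comp G X w) :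
    x ∈ comp G X v := SimpleGraph.Reachable.trans hw hx

lemma comp_eq_comp_of_mem {X : Set V} {v w : V} (hw : w ∈ comp G X v) :
    comp G X v = comp G X w := by
  ext x
  exact ⟨fun hx => SimpleGraph.Reachable.trans (SimpleGraph.Reachable.symm hw) hx,
    fun hx => SimpleGraph.Reachable.trans hw hx⟩

lemma walk_to_induce {v : V} {X : Set V} :
    ∀ {a b : V} (_ : (restrict G X).Walk a b) (ha : a ∈ comp G X v) (hb : b ∈ comp G X v),
    (G.induce (comp G X v)).Reachable ⟨a, ha⟩ ⟨b, hb⟩ := by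
  intro a b p
  induction p with
  | nil => intro ha hb; exact SimpleGraph.Reachable.refl _
  | @cons x c y h p ih =>
    intro ha hb
    have hc : c ∈ comp G X v := comp_mem_trans ha (SimpleGraph.Adj.reachable h)
    have hadj : (G.induce (comp G X v)).Adj ⟨x, ha⟩ ⟨c, hc⟩ := h.1
    exact (hadj.reachable).trans (ih hc hb)

lemma comp_isCompOf {X : Set V} {v : V} (hv : v ∈ X) : IsCompOf G X (comp G X v) := by
  refine ⟨comp_subset hv, ?_, ?_⟩
  · haveI : Nonempty ↥(comp G X v) := ⟨⟨v, mem_comp_self X v⟩⟩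
    constructor
    rintro ⟨a, ha⟩ ⟨b, hb⟩
    have ha' := ha
    have hb' := hb
    obtain ⟨p⟩ := ha'
    obtain ⟨q⟩ := hb'
    exact (walk_to_induce p (mem_comp_self X v) ha).symm.trans
      (walk_to_induce q (mem_comp_self X v) hb)
  · intro u hu w hw hadj
    exact comp_mem_trans hu (SimpleGraph.Adj.reachable ⟨hadj, comp_subset hv hu, hw⟩)

lemma induce_reach_to_restrict {K X : Set V} (hKX : K ⊆ X) :
    ∀ {a b : ↥K} (_ : (G.induce K).Reachable a b), (restrict G X).Reachable ↑a ↑b := by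
  intro a b h
  obtain ⟨p⟩ := h
  induction p with
  | nil => exact SimpleGraph.Reachable.refl _
  | @cons x c y h _ ih =>
    exact SimpleGraph.Reachable.trans
      (SimpleGraph.Adj.reachable ⟨h, hKX x.2, hKX c.2⟩) ih

lemma restrict_walk_stays {X K : Set V} (hK : IsCompOf G X K) :
    ∀ {a b : V}, (restrict G X).Walk a b → a ∈ K → b ∈ K := by
  intro a b p
  induction p with
  | nil => exact id
  | @cons x c y h _ ih => exact fun hx => ih (hK.2.2 x hx c h.2.2 h.1)

lemma isCompOf_eq_comp {X K : Set V} (hK : IsCompOf G X K) {v : V} (hv : v ∈ K) :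
    K = comp G X v := by
  apply Set.Subset.antisymm
  · intro u hu
    exact induce_reach_to_restrict hK.1 (hK.2.1.preconnected ⟨v, hv⟩ ⟨u, hu⟩)
  · intro w hw
    obtain ⟨p⟩ := hw
    exact restrict_walk_stays hK p hv

lemma exists_adj_in_comp {X K : Set V} (hK : IsCompOf G X K) (hnt : K.Nontrivial) {v : V}
    (hv : v ∈ K) : ∃ u ∈ K, G.Adj v u ∧ u ≠ v := by
  obtain ⟨x, hx, y, hy, hxy⟩ := hnt
  obtain ⟨a, haK, hav⟩ : ∃ a ∈ K, a ≠ v := by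
    by_cases hxv : x = v
    · exact ⟨y, hy, fun h => hxy (by rw [hxv, h])⟩
    · exact ⟨x, hx, hxv⟩
  obtain ⟨p'⟩ := induce_reach_to_restrict hK.1 (hK.2.1.preconnected ⟨v, hv⟩ ⟨a, haK⟩)
  cases p' with
  | nil => exact absurd rfl hav
  | @cons _ c _ h q =>
    exact ⟨c, hK.2.2 v hv c h.2.2 h.1, h.1, Ne.symm h.1.ne⟩

end Comps

section Gallai

variable [Fintype V] [DecidableEq V] {G : SimpleGraph V}

lemma iness_restrict_comp {X K : Set V} (hK : IsCompOf G X K) {v : V} (hv : v ∈ K)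
    (hIn : InessIn G X v) : InessIn G K v := by
  obtain ⟨_, M, hM, hMcard, hMv⟩ := hIn
  set MK := M.filter (fun e => ∀ x ∈ e, x ∈ K) with hMKdef
  have hMKsub : MK ⊆ M := Finset.filter_subset _ _
  have hMK : MatchIn G K MK :=
    ⟨isMatching_subset hMKsub hM.1, fun e he => (Finset.mem_filter.mp he).2⟩
  have hwhole : ∀ e ∈ M, ∀ x ∈ e, x ∈ K → e ∈ MK := by
    intro e he x hx hxK
    refine Finset.mem_filter.mpr ⟨he, ?_⟩
    intro z hz
    obtain ⟨b, rfl, hadj, _⟩ := hM.1.edge_rep he hx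
    rcases Sym2.mem_iff.mp hz with rfl | rfl
    · exact hxK
    · exact hK.2.2 x hxK z (hM.2 _ he z (Sym2.mem_mk_right x z)) hadj
  have hexpK : Exposed MK v := exposed_mono hMKsub hMv
  have hcard : MK.card = nuA G K := by
    refine le_antisymm (le_nuA hMK) ?_
    obtain ⟨L, hL, hLcard⟩ := exists_nuA_max (G := G) K
    have hLK : ∀ e ∈ L, ∀ x ∈ e, x ∈ K := hL.2
    have hdisj : ∀ e ∈ L, ∀ f ∈ M \ MK, ∀ x ∈ e, x ∉ f := by
      intro e he f hf x hx hxf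
      have hfM := (Finset.mem_sdiff.mp hf).1
      exact (Finset.mem_sdiff.mp hf).2 (hwhole f hfM x hxf (hLK e he x hx))
    have hdisjF : Disjoint L (M \ MK) := by
      rw [Finset.disjoint_left]
      intro e heL heD
      obtain ⟨a, b, hab, rfl⟩ := edge_rep' (hL.1.1 e heL)
      exact hdisj _ heL _ heD a (Sym2.mem_mk_left a b) (Sym2.mem_mk_left a b)
    have hM2 : MatchIn G X (L ∪ (M \ MK)) := by
      constructor
      · constructor
        · intro e he
          rcases Finset.mem_union.mp he with h | h
          · exact hL.1.1 e h
          · exact hM.1.1 e ((Finset.mem_sdiff.mp h).1)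
        · intro e he f hf hef x hx
          rcases Finset.mem_union.mp he with h1 | h1 <;>
            rcases Finset.mem_union.mp hf with h2 | h2
          · exact hL.1.2 e h1 f h2 hef x hx
          · exact hdisj e h1 f h2 x hx
          · intro hxf
            exact hdisj f h2 e h1 x hxf hx
          · exact hM.1.2 e ((Finset.mem_sdiff.mp h1).1) f ((Finset.mem_sdiff.mp h2).1) hef x hx
      · intro e he x hx
        rcases Finset.mem_union.mp he with h | h
        · exact hK.1 (hLK e h x hx)
        · exact hM.2 e ((Finset.mem_sdiff.mp h).1) x hx
    have hcardle := le_nuA hM2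
    rw [Finset.card_union_of_disjoint hdisjF] at hcardle
    have hsplit : (M \ MK).card + MK.card = M.card :=
      Finset.card_sdiff_add_card_eq_card hMKsub
    omega
  exact ⟨hv, MK, hMK, hcard, hexpK⟩

lemma gallai_no_two_exposed {X K : Set V} (hK : IsCompOf G X K)
    (hiness : ∀ x ∈ K, InessIn G K x) :
    ∀ M, MatchIn G K M → M.card = nuA G K → ∀ u w, u ∈ K → w ∈ K → u ≠ w →
      Exposed M u → Exposed M w → False := by
  set H := G.induce K with hHdef
  set D := {d : ℕ | ∃ M : Finset (Sym2 V), ∃ u w : ↥K, MatchIn G K M ∧ M.card = nuA G K ∧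
    u ≠ w ∧ Exposed M ↑u ∧ Exposed M ↑w ∧ H.dist u w = d} with hDdef
  intro M hM hMcard u w huK hwK huw hMu hMw
  have hDne : D.Nonempty := by
    refine ⟨H.dist ⟨u, huK⟩ ⟨w, hwK⟩, M, ⟨u, huK⟩, ⟨w, hwK⟩, hM, hMcard, ?_, hMu, hMw, rfl⟩
    intro h
    exact huw (congrArg Subtype.val h)
  have hd0mem := Nat.sInf_mem hDne
  set d0 := sInf D with hd0def
  obtain ⟨M1, u1, w1, hM1, hM1card, hne1, hexpu1, hexpw1, hdist⟩ := hd0mem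
  have hmin : ∀ d ∈ D, d0 ≤ d := fun d hd => Nat.sInf_le hd
  have hreach : H.Reachable u1 w1 := hK.2.1.preconnected u1 w1
  obtain ⟨p, hp⟩ := hreach.exists_walk_length_eq_dist
  rw [hdist] at hp
  -- d0 = 0 impossible
  have hd0pos : 0 < d0 := by
    rcases Nat.eq_zero_or_pos d0 with h | h
    · exfalso
      rw [h] at hp
      exact hne1 (SimpleGraph.Walk.eq_of_length_eq_zero hp)
    · exact h
  cases p with
  | nil => simp at hp; omega
  | @cons _ z _ hadj q =>
    have hq : q.length = d0 - 1 := by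
      simp only [SimpleGraph.Walk.length_cons] at hp
      omega
    have hu1z : u1 ≠ z := hadj.ne
    have hdistu1z : H.dist u1 z ≤ 1 := by
      have := SimpleGraph.dist_le (SimpleGraph.Walk.cons hadj SimpleGraph.Walk.nil)
      simpa using this
    have hdistzw : H.dist z w1 ≤ d0 - 1 := hq ▸ SimpleGraph.dist_le q
    -- d0 = 1 case : u1 adjacent w1
    by_cases hd01 : d0 = 1
    · have hzw : z = w1 := by
        have : q.length = 0 := by omega
        exact SimpleGraph.Walk.eq_of_length_eq_zero this
      rw [hzw] at hadj
      have hadj' : G.Adj ↑u1 ↑w1 := hadj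
      have hcovu : (↑u1 : V) ∉ covS M1 := exposed_iff_not_covS.mp hexpu1
      have hcovw : (↑w1 : V) ∉ covS M1 := exposed_iff_not_covS.mp hexpw1
      have hbig : MatchIn G K (insert s(↑u1, ↑w1) M1) := by
        refine ⟨hM1.1.insert_edge hadj' hcovu hcovw, ?_⟩
        intro e he x hx
        rcases Finset.mem_insert.mp he with rfl | he
        · rcases Sym2.mem_iff.mp hx with rfl | rfl
          · exact u1.2
          · exact w1.2
        · exact hM1.2 e he x hx
      have := le_nuA hbig
      rw [Finset.card_insert_of_notMem (fun h => hcovu ⟨_, h, Sym2.mem_mk_left _ _⟩)] at this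
      omega
    have hd02 : 2 ≤ d0 := by omega
    have hzw1 : z ≠ w1 := by
      intro h
      subst h
      have : H.dist u1 z ≥ d0 := le_of_eq hdist.symm
      omega
    -- choose M2 exposing z with maximal overlap with M1
    have hzK : InessIn G K ↑z := hiness ↑z z.2
    obtain ⟨-, Mz, hMz, hMzcard, hMzexp⟩ := hzK
    set F := Finset.univ.filter
      (fun L : Finset (Sym2 V) => MatchIn G K L ∧ L.card = nuA G K ∧ Exposed L ↑z) with hFdef
    have hFmemz : Mz ∈ F := by
      simp only [hFdef, Finset.mem_filter, Finset.mem_univ, true_and]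
      exact ⟨hMz, hMzcard, hMzexp⟩
    have hFne : F.Nonempty := ⟨Mz, hFmemz⟩
    obtain ⟨M2, hM2F, hM2max⟩ := F.exists_max_image (fun L => (L ∩ M1).card) hFne
    obtain ⟨hM2, hM2card, hexpz⟩ : MatchIn G K M2 ∧ M2.card = nuA G K ∧ Exposed M2 ↑z := by
      have := Finset.mem_filter.mp hM2F
      exact this.2
    by_cases hM2u : Exposed M2 ↑u1
    · have : d0 ≤ H.dist u1 z := hmin _ ⟨M2, u1, z, hM2, hM2card,
        (fun h => hu1z h), hM2u, hexpz, rfl⟩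
      omega
    by_cases hM2w : Exposed M2 ↑w1
    · have : d0 ≤ H.dist z w1 := hmin _ ⟨M2, z, w1, hM2, hM2card, hzw1, hexpz, hM2w, rfl⟩
      omega
    -- apply the path dichotomy
    have hu1cov : (↑u1 : V) ∈ covS M2 := not_exposed_iff_covS.mp hM2u
    rcases pd G (M2.card + M1.card) M2 M1 le_rfl hM2.1 hM1.1 ↑u1 hu1cov hexpu1 with
      ⟨z', _, _, _, hR1, _⟩ | ⟨t, hta, htP, htQ, hR3, hR4⟩
    · obtain ⟨R1, hm, hsub, hcard, _⟩ := hR1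
      have hmatch : MatchIn G K R1 := by
        refine ⟨hm, ?_⟩
        intro e he x hx
        rcases hsub e he with h | h
        · exact hM2.2 e h x hx
        · exact hM1.2 e h x hx
      have := le_nuA hmatch
      omega
    · by_cases htz : t = ↑z
      · obtain ⟨R4, hm, hsub, hcard, hcov⟩ := hR4
        have hmatch : MatchIn G K R4 := by
          refine ⟨hm, ?_⟩
          intro e he x hx
          rcases hsub e he with h | h
          · exact hM2.2 e h x hx
          · exact hM1.2 e h x hx
        have hexpz4 : Exposed R4 ↑z := by
          rw [exposed_iff_not_covS, hcov]
          rintro ⟨-, hne⟩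
          exact hne htz.symm
        have hexpw4 : Exposed R4 ↑w1 := by
          rw [exposed_iff_not_covS, hcov]
          rintro ⟨h | h, -⟩
          · exact (exposed_iff_not_covS.mp hexpw1) h
          · exact hne1 (Subtype.ext h.symm) -- ↑w1 = ↑u1
        have : d0 ≤ H.dist z w1 := hmin _ ⟨R4, z, w1, hmatch, by omega, hzw1, hexpz4, hexpw4, rfl⟩
        omega
      · obtain ⟨R3, hm, hsub, hint, ⟨q0, hq0Q, hq0P, hq0R⟩, hcard, hcov⟩ := hR3
        have hmatch : MatchIn G K R3 := by
          refine ⟨hm, ?_⟩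
          intro e he x hx
          rcases hsub e he with h | h
          · exact hM2.2 e h x hx
          · exact hM1.2 e h x hx
        have hexpz3 : Exposed R3 ↑z := by
          rw [exposed_iff_not_covS, hcov]
          rintro (⟨h, -⟩ | h)
          · exact (exposed_iff_not_covS.mp hexpz) h
          · exact htz h.symm
        have hR3F : R3 ∈ F := by
          simp only [hFdef, Finset.mem_filter, Finset.mem_univ, true_and]
          exact ⟨hmatch, by omega, hexpz3⟩
        have hss : M2 ∩ M1 ⊂ R3 ∩ M1 := by
          constructor
          · intro x hx
            have hx' := Finset.mem_inter.mp hx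
            exact Finset.mem_inter.mpr ⟨hint x hx'.1 hx'.2, hx'.2⟩
          · intro hsub'
            have : q0 ∈ M2 ∩ M1 := hsub' (Finset.mem_inter.mpr ⟨hq0R, hq0Q⟩)
            exact hq0P (Finset.mem_inter.mp this).1
        have := Finset.card_lt_card hss
        have := hM2max R3 hR3F
        omega

lemma comp_factor_critical (hZ : geZ G = ∅) {K : Set V} (hK : IsCompOf G (geX G) K)
    {v : V} (hv : v ∈ K) : ∃ L, MatchIn G K L ∧ covS L = K \ {v} := by
  have hiness : ∀ x ∈ K, InessIn G K x := fun x hx =>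
    iness_restrict_comp hK hx (iness_X hZ (hK.1 hx))
  obtain ⟨hvK, L, hL, hLcard, hLv⟩ := hiness v hv
  refine ⟨L, hL, ?_⟩
  apply Set.Subset.antisymm
  · intro x hx
    refine ⟨covS_subset_of_matchIn hL hx, ?_⟩
    intro hxv
    have : x = v := hxv
    subst this
    exact (exposed_iff_not_covS.mp hLv) hx
  · intro x hx
    obtain ⟨hxK, hxv⟩ := hx
    by_contra hxcov
    exact gallai_no_two_exposed hK hiness L hL hLcard x v hxK hvK hxv
      (exposed_iff_not_covS.mpr hxcov) hLv

end Gallai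

section Sums

variable [Fintype V] [DecidableEq V] {G : SimpleGraph V}

/-- sum of `y` over the two endpoints of an edge -/
def pairSum (y : V → ℝ) : Sym2 V → ℝ :=
  Sym2.lift ⟨fun a b => y a + y b, by intros; ring⟩

@[simp] lemma pairSum_mk (y : V → ℝ) (a b : V) : pairSum y s(a,b) = y a + y b := rfl

/-- endpoints of an edge, as a finset -/
def eFin (e : Sym2 V) : Finset V := Finset.univ.filter (· ∈ e)

lemma eFin_mk (a b : V) : eFin s(a,b) = {a, b} := by
  ext x
  simp [eFin, Sym2.mem_iff]

/-- the covered vertices of `M`, as a finset -/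
def covF (M : Finset (Sym2 V)) : Finset V := Finset.univ.filter (· ∈ covS M)

lemma covF_eq_biUnion (M : Finset (Sym2 V)) : covF M = M.biUnion eFin := by
  ext x
  simp only [covF, eFin, Finset.mem_filter, Finset.mem_univ, true_and, Finset.mem_biUnion]
  exact Iff.rfl

lemma matching_pairwise_disj {M : Finset (Sym2 V)} (hM : IsMatching G M) :
    ∀ e ∈ M, ∀ f ∈ M, e ≠ f → Disjoint (eFin e) (eFin f) := by
  intro e he f hf hef
  rw [Finset.disjoint_left]
  intro x hx hx'
  simp only [eFin, Finset.mem_filter] at hx hx'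
  exact hM.2 e he f hf hef x hx.2 hx'.2

lemma card_covF {M : Finset (Sym2 V)} (hM : IsMatching G M) :
    (covF M).card = 2 * M.card := by
  rw [covF_eq_biUnion, Finset.card_biUnion (matching_pairwise_disj hM)]
  rw [Finset.sum_congr rfl (fun e he => ?_), Finset.sum_const, smul_eq_mul, mul_comm]
  obtain ⟨a, b, hab, rfl⟩ := edge_rep' (hM.1 e he)
  rw [eFin_mk, Finset.card_insert_of_notMem (by simp [hab.ne]), Finset.card_singleton]

lemma sum_covF {M : Finset (Sym2 V)} (hM : IsMatching G M) (y : V → ℝ) :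
    ∑ v ∈ covF M, y v = ∑ e ∈ M, pairSum y e := by
  rw [covF_eq_biUnion, Finset.sum_biUnion (matching_pairwise_disj hM)]
  refine Finset.sum_congr rfl (fun e he => ?_)
  obtain ⟨a, b, hab, rfl⟩ := edge_rep' (hM.1 e he)
  rw [eFin_mk, Finset.sum_pair hab.ne, pairSum_mk]

lemma covF_compl (M : Finset (Sym2 V)) :
    Finset.univ.filter (fun v => Exposed M v) = Finset.univ \ covF M := by
  ext x
  simp [covF, exposed_iff_not_covS]

/-- a generic relational injection bound -/
lemma card_le_of_rel {α β : Type*} [DecidableEq α] [DecidableEq β]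
    (s : Finset α) (T : Finset β) (R : α → β → Prop)
    (hex : ∀ a ∈ s, ∃ b, b ∈ T ∧ R a b)
    (hinj : ∀ a₁, a₁ ∈ s → ∀ a₂, a₂ ∈ s → ∀ b, R a₁ b → R a₂ b → a₁ = a₂) :
    s.card ≤ T.card := by
  rcases s.eq_empty_or_nonempty with rfl | ⟨a0, ha0⟩
  · simp
  · obtain ⟨b0, hb0, -⟩ := hex a0 ha0
    have hex' : ∀ a : α, ∃ b, a ∈ s → b ∈ T ∧ R a b := by
      intro a
      by_cases ha : a ∈ s
      · obtain ⟨b, hb⟩ := hex a ha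
        exact ⟨b, fun _ => hb⟩
      · exact ⟨b0, fun h => absurd h ha⟩
    choose f hf using hex'
    refine Finset.card_le_card_of_injOn f (fun a ha => (hf a ha).1) ?_
    intro a1 ha1 a2 ha2 heq
    refine hinj a1 (Finset.mem_coe.mp ha1) a2 (Finset.mem_coe.mp ha2) (f a1)
      (hf a1 (Finset.mem_coe.mp ha1)).2 ?_
    rw [heq]
    exact (hf a2 (Finset.mem_coe.mp ha2)).2

end Sums

section Assembly

variable [Fintype V] [DecidableEq V] {G : SimpleGraph V}

lemma nbhd_sub_Y {K : Set V} (hK : IsCompOf G (geX G) K) : nbhd G K ⊆ geY G := by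
  rintro v ⟨hvK, w, hwK, hadj⟩
  have hvX : v ∉ geX G := fun hvX => hvK (hK.2.2 w hwK v hvX hadj)
  exact ⟨hvX, w, hK.1 hwK, hadj⟩

lemma natcard_set_eq {s : Set V} : (Nat.card ↥s) = s.toFinset.card := by
  rw [Nat.card_eq_fintype_card, Set.toFinset_card]

lemma fK_le {K : Set V} {y : V → ℝ} {u : V} (hu : u ∈ K)
    (hedge : ∀ a b : V, G.Adj a b → 1 ≤ y a + y b)
    (hN : ∀ i ∈ nbhd G K, 1/2 ≤ y i) (h0 : ∀ i : V, 0 ≤ y i) (hyu : y u = 0) :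
    fK G K ≤ (∑ v ∈ Finset.univ.filter (· ∈ K ∪ nbhd G K), y v)
      - ((Nat.card ↥K : ℝ) - 1) / 2 - (Nat.card ↥(nbhd G K) : ℝ) / 2 := by
  set LB : ℝ := -(((Nat.card ↥K : ℝ) - 1) / 2) with hLBdef
  -- every feasible value of the LP for any w ∈ K is at least LB
  have hval : ∀ w ∈ K, ∀ x ∈ {x | ∃ y' : V → ℝ,
      (∀ a b : V, G.Adj a b → a ∈ K ∪ nbhd G K → b ∈ K ∪ nbhd G K → 1 ≤ y' a + y' b) ∧
      (∀ i ∈ nbhd G K, 1 / 2 ≤ y' i) ∧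
      (∀ i ∈ K, 0 ≤ y' i) ∧
      y' w = 0 ∧
      x = (∑ v ∈ Finset.univ.filter (· ∈ K ∪ nbhd G K), y' v)
          - ((Nat.card ↥K : ℝ) - 1) / 2 - (Nat.card ↥(nbhd G K) : ℝ) / 2}, LB ≤ x := by
    intro w _ x hx
    obtain ⟨y', _, hN', h0', _, rfl⟩ := hx
    have hsplit : Finset.univ.filter (· ∈ K ∪ nbhd G K)
        = K.toFinset ∪ (nbhd G K).toFinset := by
      ext v
      simp [Set.mem_toFinset]
    have hdisj : Disjoint K.toFinset (nbhd G K).toFinset := by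
      rw [Finset.disjoint_left]
      intro v hv hv'
      exact (Set.mem_toFinset.mp hv').1 (Set.mem_toFinset.mp hv)
    have hsum1 : (0:ℝ) ≤ ∑ v ∈ K.toFinset, y' v :=
      Finset.sum_nonneg fun i hi => h0' i (Set.mem_toFinset.mp hi)
    have hsum2 : ((nbhd G K).toFinset.card : ℝ) * (1/2) ≤ ∑ v ∈ (nbhd G K).toFinset, y' v := by
      have := Finset.card_nsmul_le_sum (nbhd G K).toFinset y' (1/2)
        (fun i hi => hN' i (Set.mem_toFinset.mp hi))
      simpa [nsmul_eq_mul] using this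
    rw [hsplit, Finset.sum_union hdisj]
    have hNcard : (Nat.card ↥(nbhd G K) : ℝ) = ((nbhd G K).toFinset.card : ℝ) := by
      norm_cast
      exact natcard_set_eq
    rw [hLBdef, hNcard]
    linarith
  -- each ellKw set is nonempty
  have hellmem : ∀ w ∈ K, ellKw G K w ≤ (∑ v ∈ Finset.univ.filter (· ∈ K ∪ nbhd G K),
      (fun v => if v = w then (0:ℝ) else 1) v)
      - ((Nat.card ↥K : ℝ) - 1) / 2 - (Nat.card ↥(nbhd G K) : ℝ) / 2 := by
    intro w hw
    apply csInf_le ⟨LB, fun x hx => hval w hw x hx⟩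
    refine ⟨fun v => if v = w then (0:ℝ) else 1, ?_, ?_, ?_, by simp, rfl⟩
    · intro a b hadj _ _
      by_cases ha : a = w <;> by_cases hb : b = w
      · exact absurd (ha.trans hb.symm) hadj.ne
      · simp [ha, hb]
      · simp [ha, hb]
      · simp [ha, hb]
    · intro i hi
      have : i ≠ w := fun h => hi.1 (h ▸ hw)
      simp [this]
      norm_num
    · intro i _
      by_cases h : i = w <;> simp [h]
  have hell_lb : ∀ w ∈ K, LB ≤ ellKw G K w := by
    intro w hw
    apply le_csInf
    · obtain ⟨y', hy'⟩ : ∃ y' : V → ℝ, True := ⟨fun _ => 0, trivial⟩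
      refine ⟨_, fun v => if v = w then (0:ℝ) else 1, ?_, ?_, ?_, by simp, rfl⟩
      · intro a b hadj _ _
        by_cases ha : a = w <;> by_cases hb : b = w
        · exact absurd (ha.trans hb.symm) hadj.ne
        · simp [ha, hb]
        · simp [ha, hb]
        · simp [ha, hb]
      · intro i hi
        have : i ≠ w := fun h => hi.1 (h ▸ hw)
        simp [this]
        norm_num
      · intro i _
        by_cases h : i = w <;> simp [h]
    · exact hval w hw
  -- fK ≤ ellKw u
  have hfk : fK G K ≤ ellKw G K u := by
    apply csInf_le
    · exact ⟨LB, by rintro x ⟨w, hw, rfl⟩; exact hell_lb w hw⟩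
    · exact ⟨u, hu, rfl⟩
  refine le_trans hfk ?_
  apply csInf_le ⟨LB, fun x hx => hval u hu x hx⟩
  exact ⟨y, fun a b hadj _ _ => hedge a b hadj, hN, fun i _ => h0 i, hyu, rfl⟩

lemma exposed_y_zero {M : Finset (Sym2 V)} {y : V → ℝ} {c : Sym2 V → ℝ}
    (hM : IsMatching G M) (hcov : IsFracCover G (fun e => 1 + c e) y)
    (hsum : (∑ e ∈ M, (1 + c e)) = ∑ v, y v) :
    ∀ v, Exposed M v → y v = 0 := by
  have hterm : ∀ e ∈ M, 1 + c e ≤ pairSum y e := by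
    intro e he
    obtain ⟨a, b, hab, rfl⟩ := edge_rep' (hM.1 e he)
    exact hcov.2 a b hab
  have hAB : (∑ e ∈ M, (1 + c e)) ≤ ∑ e ∈ M, pairSum y e := Finset.sum_le_sum hterm
  have hBsum : ∑ e ∈ M, pairSum y e = ∑ v ∈ covF M, y v := (sum_covF hM y).symm
  have huniv : ∑ v, y v = ∑ v ∈ Finset.univ \ covF M, y v + ∑ v ∈ covF M, y v :=
    (Finset.sum_sdiff (Finset.subset_univ _)).symm
  have hEzero : ∑ v ∈ Finset.univ \ covF M, y v = 0 := by
    have h1 : (0:ℝ) ≤ ∑ v ∈ Finset.univ \ covF M, y v :=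
      Finset.sum_nonneg fun i _ => hcov.1 i
    have h2 : ∑ v ∈ Finset.univ \ covF M, y v ≤ 0 := by
      rw [hBsum] at hAB
      linarith [hsum, huniv]
    linarith
  intro v hv
  have hvmem : v ∈ Finset.univ \ covF M := by
    simp only [Finset.mem_sdiff, Finset.mem_univ, true_and, covF, Finset.mem_filter, not_and]
    exact exposed_iff_not_covS.mp hv
  have := (Finset.sum_eq_zero_iff_of_nonneg (fun i _ => hcov.1 i)).mp hEzero v hvmem
  exact this

lemma cost_eq {M : Finset (Sym2 V)} {y : V → ℝ} {c : Sym2 V → ℝ}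
    (hM : IsMatching G M) (hcoff : ∀ e ∈ edgeFin G, e ∉ M → c e = 0)
    (hsum : (∑ e ∈ M, (1 + c e)) = ∑ v, y v) :
    cost G c = ∑ v, y v - M.card := by
  have hMsub : M ⊆ edgeFin G := by
    intro e he
    simp only [edgeFin, Finset.mem_filter, Finset.mem_univ, true_and]
    exact hM.1 e he
  have h1 : cost G c = ∑ e ∈ M, c e := by
    unfold cost
    rw [← Finset.sum_subset hMsub (fun e he hne => hcoff e he hne)]
  have h2 : (∑ e ∈ M, (1 + c e)) = M.card + ∑ e ∈ M, c e := by
    rw [Finset.sum_add_distrib]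
    simp
  rw [h1]
  rw [h2] at hsum
  linarith

lemma comp_bound1 (hZ : geZ G = ∅) {y : V → ℝ}
    (hedge : ∀ a b : V, G.Adj a b → 1 ≤ y a + y b) (h0 : ∀ v : V, 0 ≤ y v)
    {SA : Set V} (hSA : IsCompOf G (geX G) SA) {w : V} (hw : w ∈ SA) :
    ((SA.toFinset.card : ℝ) - 1) / 2 + y w ≤ ∑ x ∈ SA.toFinset, y x := by
  obtain ⟨L, hLm, hLcov⟩ := comp_factor_critical hZ hSA hw
  have hcovF : covF L = SA.toFinset.erase w := by
    ext x
    simp only [covF, Finset.mem_filter, Finset.mem_univ, true_and, hLcov, Set.mem_diff,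
      Set.mem_singleton_iff, Finset.mem_erase, Set.mem_toFinset]
    tauto
  have hL2 : (SA.toFinset.erase w).card = 2 * L.card := by
    rw [← hcovF]; exact card_covF hLm.1
  have hLsum : (L.card : ℝ) ≤ ∑ x ∈ SA.toFinset.erase w, y x := by
    rw [← hcovF, sum_covF hLm.1]
    calc (L.card : ℝ) = ∑ _e ∈ L, (1:ℝ) := by simp
    _ ≤ ∑ e ∈ L, pairSum y e := by
        refine Finset.sum_le_sum fun e he => ?_
        obtain ⟨a, b, hab, rfl⟩ := edge_rep' (hLm.1.1 e he)
        exact hedge a b hab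
  have hwmem : w ∈ SA.toFinset := Set.mem_toFinset.mpr hw
  have hsum : ∑ x ∈ SA.toFinset.erase w, y x + y w = ∑ x ∈ SA.toFinset, y x :=
    Finset.sum_erase_add _ _ hwmem
  have hcards : (SA.toFinset.erase w).card + 1 = SA.toFinset.card :=
    Finset.card_erase_add_one hwmem
  have hcardR : (SA.toFinset.card : ℝ) = 2 * L.card + 1 := by
    rw [← hcards, hL2]
    push_cast
    ring
  linarith

lemma comp_odd (hZ : geZ G = ∅) {SA : Set V} (hSA : IsCompOf G (geX G) SA)
    {w : V} (hw : w ∈ SA) : ∃ l, SA.toFinset.card = 2 * l + 1 := by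
  obtain ⟨L, hLm, hLcov⟩ := comp_factor_critical hZ hSA hw
  have hcovF : covF L = SA.toFinset.erase w := by
    ext x
    simp only [covF, Finset.mem_filter, Finset.mem_univ, true_and, hLcov, Set.mem_diff,
      Set.mem_singleton_iff, Finset.mem_erase, Set.mem_toFinset]
    tauto
  have hL2 : (SA.toFinset.erase w).card = 2 * L.card := by
    rw [← hcovF]; exact card_covF hLm.1
  have hwmem : w ∈ SA.toFinset := Set.mem_toFinset.mpr hw
  have hcards : (SA.toFinset.erase w).card + 1 = SA.toFinset.card :=
    Finset.card_erase_add_one hwmem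
  exact ⟨L.card, by omega⟩

lemma comp_sum_lower (hZ : geZ G = ∅) {M : Finset (Sym2 V)} {y : V → ℝ}
    (hedge : ∀ a b : V, G.Adj a b → 1 ≤ y a + y b) (h0 : ∀ v : V, 0 ≤ y v)
    (htri : ∀ v : V, y v = 0 ∨ y v = 1/2 ∨ y v = 1)
    (hyexp : ∀ v : V, Exposed M v → y v = 0)
    {SA : Set V} (hSA : IsCompOf G (geX G) SA) (hnt' : SA.Nontrivial) :
    (SA.toFinset.card : ℝ)/2 + (if ∃ x ∈ SA, Exposed M x then (1:ℝ)/2 else 0)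
      ≤ ∑ x ∈ SA.toFinset, y x := by
  by_cases hex : ∃ x ∈ SA, Exposed M x
  · obtain ⟨x, hxSA, hxexp⟩ := hex
    obtain ⟨n1, hn1SA, hadj, _⟩ := exists_adj_in_comp hSA hnt' hxSA
    have hyx : y x = 0 := hyexp x hxexp
    have hyn1 : 1 ≤ y n1 := by
      have := hedge x n1 hadj
      linarith
    have := comp_bound1 hZ hedge h0 hSA hn1SA
    simp only [if_pos (⟨x, hxSA, hxexp⟩ : ∃ x ∈ SA, Exposed M x)]
    linarith
  · obtain ⟨x0, hx0⟩ := hnt'.nonempty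
    obtain ⟨u0, hu0SA, hadj0, _⟩ := exists_adj_in_comp hSA hnt' hx0
    have hkey : ∃ w ∈ SA, 1/2 ≤ y w := by
      rcases htri x0 with h | h | h
      · refine ⟨u0, hu0SA, ?_⟩
        have := hedge x0 u0 hadj0
        linarith
      · exact ⟨x0, hx0, by linarith⟩
      · exact ⟨x0, hx0, by linarith⟩
    obtain ⟨w, hwSA, hyw⟩ := hkey
    have := comp_bound1 hZ hedge h0 hSA hwSA
    simp only [if_neg hex]
    linarith

end Assembly

/-- if `Z = ∅`, every component of `G[X]` is nontrivial, and
`(M*, y*, c*)` is an optimal MFASP solution satisfying properties (a)–(d) whose matching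
exposes a vertex of the component `K` of `G[X]`, then the cost of `c*` is at least
`f(K) + r − 1`. -/
theorem stmt10 {V : Type*} [Fintype V] [DecidableEq V] (G : SimpleGraph V)
    (hZ : geZ G = ∅)
    (hnt : ∀ K : Set V, IsCompOf G (geX G) K → K.Nontrivial)
    (M : Finset (Sym2 V)) (y : V → ℝ) (c : Sym2 V → ℝ)
    (hopt : OptSol G M y c) (habcd : PropsABCD G M y c)
    (K : Set V) (hK : IsCompOf G (geX G) K)
    (hexp : ∃ u ∈ K, Exposed M u) :
    fK G K + rGE G - 1 ≤ cost G c := by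
  classical
  obtain ⟨u, huK, huExp⟩ := hexp
  obtain ⟨hMmatch, hc0, hcover, hsum⟩ := hopt.1
  obtain ⟨hcoff, _hc01, _hcardnu, _hchalf, hytri, hyY⟩ := habcd
  have hKX : K ⊆ geX G := hK.1
  have hNY : nbhd G K ⊆ geY G := nbhd_sub_Y hK
  have hXorY : ∀ v : V, v ∈ geX G ∨ v ∈ geY G := by
    intro v
    by_contra h
    push_neg at h
    have hv : v ∈ geZ G := ⟨h.1, h.2⟩
    rw [hZ] at hv
    exact hv
  have hy0 : ∀ v : V, 0 ≤ y v := hcover.1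
  have hedge : ∀ a b : V, G.Adj a b → 1 ≤ y a + y b := by
    intro a b hab
    have h1 : 1 + c s(a,b) ≤ y a + y b := hcover.2 a b hab
    have hmem : s(a,b) ∈ edgeFin G := by
      simp only [edgeFin, Finset.mem_filter, Finset.mem_univ, true_and,
        SimpleGraph.mem_edgeSet]
      exact hab
    have h2 : 0 ≤ c s(a,b) := hc0 _ hmem
    linarith
  have hyexp : ∀ v, Exposed M v → y v = 0 := exposed_y_zero hMmatch hcover hsum
  have hyu : y u = 0 := hyexp u huExp
  have hcosteq : cost G c = ∑ v, y v - M.card := cost_eq hMmatch hcoff hsum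
  have hfKle : fK G K ≤ (∑ v ∈ Finset.univ.filter (· ∈ K ∪ nbhd G K), y v)
      - ((Nat.card ↥K : ℝ) - 1)/2 - (Nat.card ↥(nbhd G K) : ℝ)/2 :=
    fK_le huK hedge (fun i hi => hyY i (hNY hi)) hy0 hyu
  -- the components, as finsets
  set ℱ := (geX G).toFinset.image (fun v => (comp G (geX G) v).toFinset) with hFdef
  have hFmem : ∀ A ∈ ℱ, ∃ v0, v0 ∈ geX G ∧ A = (comp G (geX G) v0).toFinset := by
    intro A hA
    obtain ⟨v0, hv0, hAv⟩ := Finset.mem_image.mp hA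
    exact ⟨v0, Set.mem_toFinset.mp hv0, hAv.symm⟩
  have hKeq : K = comp G (geX G) u := isCompOf_eq_comp hK huK
  have hKfF : K.toFinset ∈ ℱ := by
    refine Finset.mem_image.mpr ⟨u, Set.mem_toFinset.mpr (hKX huK), ?_⟩
    rw [← hKeq]
  have hFdisj : ∀ A ∈ ℱ, ∀ B ∈ ℱ, A ≠ B → Disjoint A B := by
    intro A hA B hB hAB
    obtain ⟨a0, ha0X, rfl⟩ := hFmem A hA
    obtain ⟨b0, hb0X, rfl⟩ := hFmem B hB
    rw [Finset.disjoint_left]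
    intro x hxA hxB
    have h1 : comp G (geX G) a0 = comp G (geX G) x :=
      comp_eq_comp_of_mem (Set.mem_toFinset.mp hxA)
    have h2 : comp G (geX G) b0 = comp G (geX G) x :=
      comp_eq_comp_of_mem (Set.mem_toFinset.mp hxB)
    exact hAB (Set.toFinset_inj.mpr (h1.trans h2.symm))
  have hbiU : (ℱ.erase K.toFinset).biUnion id = (geX G).toFinset \ K.toFinset := by
    ext x
    simp only [Finset.mem_biUnion, Finset.mem_erase, id_eq, Finset.mem_sdiff]
    constructor
    · rintro ⟨A, ⟨hAne, hA⟩, hxA⟩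
      obtain ⟨v0, hv0X, rfl⟩ := hFmem A hA
      have hxX : x ∈ geX G := comp_subset hv0X (Set.mem_toFinset.mp hxA)
      refine ⟨Set.mem_toFinset.mpr hxX, ?_⟩
      intro hxK
      apply hAne
      have h1 : comp G (geX G) v0 = comp G (geX G) x :=
        comp_eq_comp_of_mem (Set.mem_toFinset.mp hxA)
      have h2 : K = comp G (geX G) x := isCompOf_eq_comp hK (Set.mem_toFinset.mp hxK)
      exact Set.toFinset_inj.mpr (h1.trans h2.symm)
    · rintro ⟨hxX, hxK⟩
      refine ⟨(comp G (geX G) x).toFinset, ⟨?_, Finset.mem_image.mpr ⟨x, hxX, rfl⟩⟩,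
        Set.mem_toFinset.mpr (mem_comp_self _ _)⟩
      intro hEq
      apply hxK
      rw [← hEq]
      exact Set.mem_toFinset.mpr (mem_comp_self _ _)
  have hcount : Nat.card {K' : Set V // IsCompOf G (geX G) K'} = ℱ.card := by
    have hf : ∀ K' : {K' : Set V // IsCompOf G (geX G) K'}, K'.1.toFinset ∈ ℱ := by
      rintro ⟨K', hK'⟩
      obtain ⟨v⟩ := hK'.2.1.nonempty
      refine Finset.mem_image.mpr ⟨↑v, Set.mem_toFinset.mpr (hK'.1 v.2), ?_⟩
      rw [← isCompOf_eq_comp hK' v.2]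
    have hbij : Function.Bijective
        (fun K' : {K' : Set V // IsCompOf G (geX G) K'} =>
          (⟨K'.1.toFinset, hf K'⟩ : {A : Finset V // A ∈ ℱ})) := by
      constructor
      · rintro ⟨K1, h1⟩ ⟨K2, h2⟩ heq
        apply Subtype.ext
        have h3 : K1.toFinset = K2.toFinset := congrArg Subtype.val heq
        exact Set.toFinset_inj.mp h3
      · rintro ⟨A, hA⟩
        obtain ⟨v, hv, hAv⟩ := Finset.mem_image.mp hA
        refine ⟨⟨comp G (geX G) v, comp_isCompOf (Set.mem_toFinset.mp hv)⟩, ?_⟩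
        exact Subtype.ext hAv
    calc Nat.card {K' : Set V // IsCompOf G (geX G) K'}
        = Nat.card {A : Finset V // A ∈ ℱ} := Nat.card_eq_of_bijective _ hbij
      _ = ℱ.card := by rw [Nat.card_eq_fintype_card, Fintype.card_coe]
  have hodd : ∀ A ∈ ℱ, ∃ l, A.card = 2*l+1 := by
    intro A hA
    obtain ⟨v0, hv0X, rfl⟩ := hFmem A hA
    exact comp_odd hZ (comp_isCompOf hv0X) (mem_comp_self _ v0)
  -- exposed / unexposed components
  have hsplitF : (ℱ.filter (fun A => ∃ x ∈ A, Exposed M x)).card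
      + (ℱ.filter (fun A => ¬ ∃ x ∈ A, Exposed M x)).card = ℱ.card :=
    Finset.card_filter_add_card_filter_not _
  have hKfEx : K.toFinset ∈ ℱ.filter (fun A => ∃ x ∈ A, Exposed M x) :=
    Finset.mem_filter.mpr ⟨hKfF, u, Set.mem_toFinset.mpr huK, huExp⟩
  have hnoY : (ℱ.filter (fun A => ¬ ∃ x ∈ A, Exposed M x)).card ≤ (geY G).toFinset.card := by
    apply card_le_of_rel _ _ (fun A p => ∃ x, x ∈ A ∧ s(x,p) ∈ M)
    · intro A hA
      obtain ⟨hAF, hnoexp⟩ := Finset.mem_filter.mp hA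
      obtain ⟨v0, hv0X, rfl⟩ := hFmem A hAF
      have hMim : IsMatching G (M.filter (fun e => ∀ x ∈ e, x ∈ comp G (geX G) v0)) :=
        isMatching_subset (Finset.filter_subset _ _) hMmatch
      obtain ⟨x, hxA, hxnc⟩ : ∃ x ∈ (comp G (geX G) v0).toFinset,
          x ∉ covS (M.filter (fun e => ∀ x ∈ e, x ∈ comp G (geX G) v0)) := by
        by_contra h
        push_neg at h
        have heq : covF (M.filter (fun e => ∀ x ∈ e, x ∈ comp G (geX G) v0))
            = (comp G (geX G) v0).toFinset := by
          ext z
          simp only [covF, Finset.mem_filter, Finset.mem_univ, true_and]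
          constructor
          · rintro ⟨e, he, hz⟩
            exact Set.mem_toFinset.mpr ((Finset.mem_filter.mp he).2 z hz)
          · exact fun hz => h z hz
        have hc := card_covF hMim
        obtain ⟨l, hl⟩ := hodd _ hAF
        rw [heq] at hc
        omega
      have hxM : ¬ Exposed M x := fun hE => hnoexp ⟨x, hxA, hE⟩
      obtain ⟨e, he, hxe⟩ := not_exposed_iff_covS.mp hxM
      obtain ⟨p, rfl, hadjxp, _⟩ := hMmatch.edge_rep he hxe
      have hxSA : x ∈ comp G (geX G) v0 := Set.mem_toFinset.mp hxA
      have hpSA : p ∉ comp G (geX G) v0 := by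
        intro hp
        apply hxnc
        refine ⟨s(x,p), Finset.mem_filter.mpr ⟨he, ?_⟩, Sym2.mem_mk_left _ _⟩
        intro z hz
        rcases Sym2.mem_iff.mp hz with rfl | rfl
        · exact hxSA
        · exact hp
      have hxX : x ∈ geX G := comp_subset hv0X hxSA
      have hpY : p ∈ geY G := by
        refine ⟨?_, x, hxX, hadjxp⟩
        intro hpX
        exact hpSA (comp_mem_trans hxSA (SimpleGraph.Adj.reachable ⟨hadjxp, hxX, hpX⟩))
      exact ⟨p, Set.mem_toFinset.mpr hpY, x, hxA, he⟩
    · rintro A1 hA1 A2 hA2 p ⟨x1, hx1, he1⟩ ⟨x2, hx2, he2⟩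
      have heq : s(x1,p) = s(x2,p) :=
        hMmatch.unique he1 he2 (Sym2.mem_mk_right x1 p) (Sym2.mem_mk_right x2 p)
      have hx12 : x1 = x2 := by
        rcases Sym2.eq_iff.mp heq with ⟨h, _⟩ | ⟨h1, _⟩
        · exact h
        · exfalso
          have hadj : G.Adj x1 p := G.mem_edgeSet.mp (hMmatch.1 _ he1)
          exact hadj.ne h1
      obtain ⟨a1, ha1X, rfl⟩ := hFmem A1 (Finset.mem_of_mem_filter A1 hA1)
      obtain ⟨a2, ha2X, rfl⟩ := hFmem A2 (Finset.mem_of_mem_filter A2 hA2)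
      have h1 : comp G (geX G) a1 = comp G (geX G) x1 :=
        comp_eq_comp_of_mem (Set.mem_toFinset.mp hx1)
      have h2 : comp G (geX G) a2 = comp G (geX G) x2 :=
        comp_eq_comp_of_mem (Set.mem_toFinset.mp hx2)
      rw [hx12] at h1
      exact Set.toFinset_inj.mpr (h1.trans h2.symm)
  have hExEf : (ℱ.filter (fun A => ∃ x ∈ A, Exposed M x)).card
      ≤ (Finset.univ.filter (fun v => Exposed M v)).card := by
    apply card_le_of_rel _ _ (fun A x => x ∈ A ∧ Exposed M x)
    · intro A hA
      obtain ⟨-, x, hx, hE⟩ := Finset.mem_filter.mp hA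
      exact ⟨x, Finset.mem_filter.mpr ⟨Finset.mem_univ x, hE⟩, hx, hE⟩
    · rintro A1 hA1 A2 hA2 x ⟨hx1, -⟩ ⟨hx2, -⟩
      obtain ⟨a1, ha1X, rfl⟩ := hFmem A1 (Finset.mem_of_mem_filter A1 hA1)
      obtain ⟨a2, ha2X, rfl⟩ := hFmem A2 (Finset.mem_of_mem_filter A2 hA2)
      have h1 : comp G (geX G) a1 = comp G (geX G) x :=
        comp_eq_comp_of_mem (Set.mem_toFinset.mp hx1)
      have h2 : comp G (geX G) a2 = comp G (geX G) x :=
        comp_eq_comp_of_mem (Set.mem_toFinset.mp hx2)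
      exact Set.toFinset_inj.mpr (h1.trans h2.symm)
  -- splitting the universe
  have hSfil : Finset.univ.filter (· ∈ K ∪ nbhd G K) = K.toFinset ∪ (nbhd G K).toFinset := by
    ext v
    simp [Set.mem_toFinset]
  have hdisjKN : Disjoint K.toFinset (nbhd G K).toFinset := by
    rw [Finset.disjoint_left]
    intro v hv hv'
    exact (Set.mem_toFinset.mp hv').1 (Set.mem_toFinset.mp hv)
  have hdisj1 : Disjoint (Finset.univ.filter (· ∈ K ∪ nbhd G K))
      ((geY G).toFinset \ (nbhd G K).toFinset) := by
    rw [Finset.disjoint_left]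
    intro v hv hv'
    obtain ⟨hvY, hvN⟩ := Finset.mem_sdiff.mp hv'
    rcases (Finset.mem_filter.mp hv).2 with h | h
    · exact (Set.mem_toFinset.mp hvY).1 (hKX h)
    · exact hvN (Set.mem_toFinset.mpr h)
  have hdisj2 : Disjoint (Finset.univ.filter (· ∈ K ∪ nbhd G K)
        ∪ ((geY G).toFinset \ (nbhd G K).toFinset))
      ((geX G).toFinset \ K.toFinset) := by
    rw [Finset.disjoint_left]
    intro v hv hv'
    obtain ⟨hvX, hvK⟩ := Finset.mem_sdiff.mp hv'
    rcases Finset.mem_union.mp hv with h | h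
    · rcases (Finset.mem_filter.mp h).2 with h1 | h1
      · exact hvK (Set.mem_toFinset.mpr h1)
      · exact (hNY h1).1 (Set.mem_toFinset.mp hvX)
    · exact (Set.mem_toFinset.mp (Finset.mem_sdiff.mp h).1).1 (Set.mem_toFinset.mp hvX)
  have hunion : (Finset.univ.filter (· ∈ K ∪ nbhd G K)
      ∪ ((geY G).toFinset \ (nbhd G K).toFinset))
      ∪ ((geX G).toFinset \ K.toFinset) = Finset.univ := by
    apply Finset.eq_univ_iff_forall.mpr
    intro x
    simp only [Finset.mem_union, Finset.mem_sdiff, Finset.mem_filter, Finset.mem_univ,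
      true_and, Set.mem_toFinset, Set.mem_union]
    rcases hXorY x with hx | hx
    · by_cases hxK : x ∈ K
      · exact Or.inl (Or.inl (Or.inl hxK))
      · exact Or.inr ⟨hx, hxK⟩
    · by_cases hxN : x ∈ nbhd G K
      · exact Or.inl (Or.inl (Or.inr hxN))
      · exact Or.inl (Or.inr ⟨hx, hxN⟩)
  have husplit : ∑ v, y v = (∑ v ∈ Finset.univ.filter (· ∈ K ∪ nbhd G K), y v)
      + (∑ v ∈ (geY G).toFinset \ (nbhd G K).toFinset, y v)
      + (∑ v ∈ (geX G).toFinset \ K.toFinset, y v) := by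
    conv_lhs => rw [← hunion]
    rw [Finset.sum_union hdisj2, Finset.sum_union hdisj1]
  have hYNsum : (((geY G).toFinset \ (nbhd G K).toFinset).card : ℝ) * (1/2)
      ≤ ∑ v ∈ (geY G).toFinset \ (nbhd G K).toFinset, y v := by
    have := Finset.card_nsmul_le_sum ((geY G).toFinset \ (nbhd G K).toFinset) y (1/2)
      (fun i hi => hyY i (Set.mem_toFinset.mp (Finset.mem_sdiff.mp hi).1))
    simpa [nsmul_eq_mul] using this
  have hXKsum : ∑ v ∈ (geX G).toFinset \ K.toFinset, y v
      = ∑ A ∈ ℱ.erase K.toFinset, ∑ x ∈ A, y x := by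
    have h : ∑ x ∈ (ℱ.erase K.toFinset).biUnion id, y x
        = ∑ A ∈ ℱ.erase K.toFinset, ∑ x ∈ A, y x :=
      Finset.sum_biUnion (fun A hA B hB hAB =>
        hFdisj A (Finset.mem_of_mem_erase hA) B (Finset.mem_of_mem_erase hB) hAB)
    rw [hbiU] at h
    exact h
  have hperA : ∀ A ∈ ℱ.erase K.toFinset,
      (A.card : ℝ)/2 + (if A ∈ ℱ.filter (fun A => ∃ x ∈ A, Exposed M x)
        then (1:ℝ)/2 else 0) ≤ ∑ x ∈ A, y x := by
    intro A hA
    obtain ⟨hAne, hAF⟩ := Finset.mem_erase.mp hA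
    obtain ⟨v0, hv0X, rfl⟩ := hFmem A hAF
    have hSA := comp_isCompOf (G := G) hv0X
    have hnt' := hnt _ hSA
    have hlow := comp_sum_lower hZ hedge hy0 hytri hyexp hSA hnt'
    have hiff : ((comp G (geX G) v0).toFinset
        ∈ ℱ.filter (fun A => ∃ x ∈ A, Exposed M x))
        ↔ ∃ x ∈ comp G (geX G) v0, Exposed M x := by
      rw [Finset.mem_filter]
      constructor
      · rintro ⟨-, x, hx, hE⟩
        exact ⟨x, Set.mem_toFinset.mp hx, hE⟩
      · rintro ⟨x, hx, hE⟩
        exact ⟨hAF, x, Set.mem_toFinset.mpr hx, hE⟩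
    by_cases hcase : ∃ x ∈ comp G (geX G) v0, Exposed M x
    · rw [if_pos (hiff.mpr hcase)]
      rw [if_pos hcase] at hlow
      exact hlow
    · rw [if_neg (fun hmem => hcase (hiff.mp hmem))]
      rw [if_neg hcase] at hlow
      exact hlow
  have hsumA : ∑ A ∈ ℱ.erase K.toFinset,
      ((A.card : ℝ)/2 + (if A ∈ ℱ.filter (fun A => ∃ x ∈ A, Exposed M x)
        then (1:ℝ)/2 else 0))
      ≤ ∑ A ∈ ℱ.erase K.toFinset, ∑ x ∈ A, y x := Finset.sum_le_sum hperA
  have hsumA1 : ∑ A ∈ ℱ.erase K.toFinset, (A.card : ℝ)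
      = (((geX G).toFinset \ K.toFinset).card : ℝ) := by
    have hcard := Finset.card_biUnion (s := ℱ.erase K.toFinset) (t := id)
      (fun A hA B hB hAB =>
        hFdisj A (Finset.mem_of_mem_erase hA) B (Finset.mem_of_mem_erase hB) hAB)
    rw [hbiU] at hcard
    rw [hcard]
    push_cast
    rfl
  have hsumA2 : ∑ A ∈ ℱ.erase K.toFinset,
      (if A ∈ ℱ.filter (fun A => ∃ x ∈ A, Exposed M x) then (1:ℝ)/2 else 0)
      = ((((ℱ.erase K.toFinset).filter
          (· ∈ ℱ.filter (fun A => ∃ x ∈ A, Exposed M x))).card : ℝ)) * (1/2) := by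
    rw [← Finset.sum_filter, Finset.sum_const]
    simp [nsmul_eq_mul]
  have hfilterEx : (ℱ.filter (fun A => ∃ x ∈ A, Exposed M x)).card
      ≤ ((ℱ.erase K.toFinset).filter
        (· ∈ ℱ.filter (fun A => ∃ x ∈ A, Exposed M x))).card + 1 := by
    have hsub : (ℱ.filter (fun A => ∃ x ∈ A, Exposed M x)).erase K.toFinset
        ⊆ (ℱ.erase K.toFinset).filter
          (· ∈ ℱ.filter (fun A => ∃ x ∈ A, Exposed M x)) := by
      intro A hA
      obtain ⟨hne, hmem⟩ := Finset.mem_erase.mp hA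
      exact Finset.mem_filter.mpr
        ⟨Finset.mem_erase.mpr ⟨hne, Finset.mem_of_mem_filter A hmem⟩, hmem⟩
    have h1 := Finset.card_le_card hsub
    have h2 := Finset.card_erase_add_one hKfEx
    omega
  -- cardinal identities
  have hdisjXY : Disjoint (geX G).toFinset (geY G).toFinset := by
    rw [Finset.disjoint_left]
    intro v hv hv'
    exact (Set.mem_toFinset.mp hv').1 (Set.mem_toFinset.mp hv)
  have hXYunion : (geX G).toFinset ∪ (geY G).toFinset = Finset.univ := by
    apply Finset.eq_univ_iff_forall.mpr
    intro x
    rcases hXorY x with h | h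
    · exact Finset.mem_union_left _ (Set.mem_toFinset.mpr h)
    · exact Finset.mem_union_right _ (Set.mem_toFinset.mpr h)
  have hXY : (geX G).toFinset.card + (geY G).toFinset.card = Fintype.card V := by
    rw [← Finset.card_union_of_disjoint hdisjXY, hXYunion, Finset.card_univ]
  have hNsubY : (nbhd G K).toFinset ⊆ (geY G).toFinset := by
    intro v hv
    exact Set.mem_toFinset.mpr (hNY (Set.mem_toFinset.mp hv))
  have hKsubX : K.toFinset ⊆ (geX G).toFinset := by
    intro v hv
    exact Set.mem_toFinset.mpr (hKX (Set.mem_toFinset.mp hv))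
  have hYN : ((geY G).toFinset \ (nbhd G K).toFinset).card + (nbhd G K).toFinset.card
      = (geY G).toFinset.card := Finset.card_sdiff_add_card_eq_card hNsubY
  have hXK : ((geX G).toFinset \ K.toFinset).card + K.toFinset.card
      = (geX G).toFinset.card := Finset.card_sdiff_add_card_eq_card hKsubX
  have hMcard2 : 2*M.card + (Finset.univ.filter (fun v => Exposed M v)).card
      = Fintype.card V := by
    have h1 := covF_compl M
    have h2 := card_covF hMmatch
    have h3 : (Finset.univ \ covF M).card + (covF M).card = Finset.univ.card :=
      Finset.card_sdiff_add_card_eq_card (Finset.subset_univ _)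
    rw [Finset.card_univ] at h3
    rw [h1]
    omega
  have hNatK : (Nat.card ↥K : ℝ) = (K.toFinset.card : ℝ) := by
    norm_cast
    exact natcard_set_eq
  have hNatN : (Nat.card ↥(nbhd G K) : ℝ) = ((nbhd G K).toFinset.card : ℝ) := by
    norm_cast
    exact natcard_set_eq
  have hrGE : rGE G = (ℱ.card : ℝ) - ((geY G).toFinset.card : ℝ) := by
    unfold rGE
    rw [hcount]
    congr 1
    norm_cast
    exact natcard_set_eq
  -- final arithmetic
  rw [hNatK, hNatN] at hfKle
  have hXKge : ((((geX G).toFinset \ K.toFinset).card : ℝ))/2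
      + ((((ℱ.erase K.toFinset).filter
          (· ∈ ℱ.filter (fun A => ∃ x ∈ A, Exposed M x))).card : ℝ)) * (1/2)
      ≤ ∑ v ∈ (geX G).toFinset \ K.toFinset, y v := by
    rw [hXKsum]
    refine le_trans (le_of_eq ?_) hsumA
    rw [Finset.sum_add_distrib, hsumA2, ← Finset.sum_div, hsumA1]
  have cYN : ((((geY G).toFinset \ (nbhd G K).toFinset).card : ℝ))
      + ((nbhd G K).toFinset.card : ℝ) = ((geY G).toFinset.card : ℝ) := by
    exact_mod_cast hYN
  have cXK : ((((geX G).toFinset \ K.toFinset).card : ℝ)) + (K.toFinset.card : ℝ)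
      = ((geX G).toFinset.card : ℝ) := by exact_mod_cast hXK
  have cXY : ((geX G).toFinset.card : ℝ) + ((geY G).toFinset.card : ℝ)
      = (Fintype.card V : ℝ) := by exact_mod_cast hXY
  have cM : 2*(M.card : ℝ) + ((Finset.univ.filter (fun v => Exposed M v)).card : ℝ)
      = (Fintype.card V : ℝ) := by exact_mod_cast hMcard2
  have cF : ((ℱ.filter (fun A => ∃ x ∈ A, Exposed M x)).card : ℝ)
      + ((ℱ.filter (fun A => ¬ ∃ x ∈ A, Exposed M x)).card : ℝ) = (ℱ.card : ℝ) := by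
    exact_mod_cast hsplitF
  have cnoY : ((ℱ.filter (fun A => ¬ ∃ x ∈ A, Exposed M x)).card : ℝ)
      ≤ ((geY G).toFinset.card : ℝ) := by exact_mod_cast hnoY
  have cExEf : ((ℱ.filter (fun A => ∃ x ∈ A, Exposed M x)).card : ℝ)
      ≤ ((Finset.univ.filter (fun v => Exposed M v)).card : ℝ) := by exact_mod_cast hExEf
  have cfilter : ((ℱ.filter (fun A => ∃ x ∈ A, Exposed M x)).card : ℝ)
      ≤ (((ℱ.erase K.toFinset).filter
          (· ∈ ℱ.filter (fun A => ∃ x ∈ A, Exposed M x))).card : ℝ) + 1 := by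
    exact_mod_cast hfilterEx
  rw [hcosteq, hrGE, husplit]
  linarith [hfKle, hYNsum, hXKge, cYN, cXK, cXY, cM, cF, cnoY, cExEf, cfilter]


end Stab
end
end

section
/- Let G=(V,E) be a graph, 0 < k < |E|, and let Ĝ be the MkEC-reduction graph of (G,k) with parameter q ≥ max_{v∈V} deg_G(v). Then the maximum cardinality of a matching in Ĝ equals 2|Y''| + k; every vertex of Ĝ outside Y'' is exposed by some maximum-cardinality matching of Ĝ; and no maximum-cardinality matching of Ĝ exposes a vertex of Y''. Consequently, the Gallai–Edmonds decomposition of Ĝ is given by X = V(Ĝ) \ Y'', Y = Y'', and Z = ∅. -/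
open Finset
open scoped Classical

noncomputable section

namespace Stab

/-- `|Y'|`: the size of the first copy of the Tutte side in the MkEC reduction,
`max(|V|, |E|−k)`. -/
def Y1card {V : Type*} [Fintype V] [DecidableEq V] (G : SimpleGraph V) (k : ℕ) : ℕ :=
  max (Fintype.card V) ((edgeFin G).card - k)

/-- the total number of triangles of the MkEC reduction graph, `q·|Y'| + k` -/
def triCount {V : Type*} [Fintype V] [DecidableEq V] (G : SimpleGraph V) (k q : ℕ) : ℕ :=
  q * Y1card G k + k

/-- the maximum degree of `G` -/
def maxDeg {V : Type*} [Fintype V] (G : SimpleGraph V) : ℕ :=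
  Finset.univ.sup fun v : V => (Finset.univ.filter fun u => G.Adj v u).card

/-- The MkEC-reduction graph `Ĝ` of `(G,k)` with parameter `q`, bundled with all the
data of its construction: the triangles `tri i` (3-cliques, `q·|Y'| + k` of them, where
`|Y'| = max(|V|, |E|−k)`, pairwise disjoint), the set `Ypp = Y'' = Y_1 ∪ … ∪ Y_q`
consisting of `q` copies of the original vertices (`yv j v`) and of the extra Tutte-side
vertices (`yext j t`, `max(|V|, |E|−k) − |V|` of them per copy), and an injection
`edgeIdx` assigning to every edge of `G` its original triangle.  Vertices of an original
triangle `tri (edgeIdx e)` are adjacent exactly to the copies of the endpoints of `e` and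
to all extra vertices; vertices of the remaining (added) triangles are adjacent to all of
`Y''`; triangles are cliques; and there are no further edges. -/
structure MkECRed (V W : Type*) [Fintype V] [DecidableEq V] [Fintype W] [DecidableEq W]
    (G : SimpleGraph V) (k q : ℕ) where
  Ghat : SimpleGraph W
  tri : Fin (triCount G k q) → Finset W
  Ypp : Finset W
  yv : Fin q → V → W
  yext : Fin q → Fin (Y1card G k - Fintype.card V) → W
  edgeIdx : {e : Sym2 V // e ∈ edgeFin G} → Fin (triCount G k q)
  hYppCard : Ypp.card = q * Y1card G k
  hyvMem : ∀ j v, yv j v ∈ Ypp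
  hyextMem : ∀ j t, yext j t ∈ Ypp
  hInj : Function.Injective fun p : Fin q × (V ⊕ Fin (Y1card G k - Fintype.card V)) =>
    Sum.elim (yv p.1) (yext p.1) p.2
  hYppSurj : ∀ w ∈ Ypp, (∃ j v, w = yv j v) ∨ ∃ j t, w = yext j t
  htriCard : ∀ i, (tri i).card = 3
  htriClique : ∀ i, ∀ a ∈ tri i, ∀ b ∈ tri i, a ≠ b → Ghat.Adj a b
  htriDisj : ∀ i i', i ≠ i' → Disjoint (tri i) (tri i')
  htriYpp : ∀ i, Disjoint (tri i) Ypp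
  hcover : ∀ w : W, w ∈ Ypp ∨ ∃ i, w ∈ tri i
  hedgeIdxInj : Function.Injective edgeIdx
  hAdjOrig : ∀ e : {e : Sym2 V // e ∈ edgeFin G}, ∀ a ∈ tri (edgeIdx e),
    ∀ (j : Fin q) (v : V), Ghat.Adj a (yv j v) ↔ v ∈ e.1
  hAdjExt : ∀ i, ∀ a ∈ tri i, ∀ j t, Ghat.Adj a (yext j t)
  hAdjNonOrig : ∀ i, (∀ e, edgeIdx e ≠ i) → ∀ a ∈ tri i, ∀ w ∈ Ypp, Ghat.Adj a w
  hEdges : ∀ a b : W, Ghat.Adj a b →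
    (∃ i, a ∈ tri i ∧ b ∈ tri i) ∨ (∃ i, a ∈ tri i ∧ b ∈ Ypp) ∨
    (∃ i, b ∈ tri i ∧ a ∈ Ypp)

end Stab

namespace Stab

section Aux
set_option linter.unusedSectionVars false

variable {V W : Type*} [Fintype V] [DecidableEq V] [Fintype W] [DecidableEq W]
  {G : SimpleGraph V} {k q : ℕ}

lemma degree_le_maxDeg (G : SimpleGraph V) (v : V) : G.degree v ≤ maxDeg G := by
  have h : G.degree v = (Finset.univ.filter fun u => G.Adj v u).card := by
    rw [SimpleGraph.degree, SimpleGraph.neighborFinset_eq_filter]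
  rw [h]
  exact Finset.le_sup (f := fun v : V => (Finset.univ.filter fun u => G.Adj v u).card)
    (Finset.mem_univ v)

lemma two_m_le (G : SimpleGraph V) (hq : maxDeg G ≤ q) :
    2 * (edgeFin G).card ≤ q * Fintype.card V := by
  have hE : edgeFin G = G.edgeFinset := by
    ext e; simp [edgeFin]
  rw [hE]
  calc 2 * G.edgeFinset.card = ∑ v, G.degree v :=
        (SimpleGraph.sum_degrees_eq_twice_card_edges G).symm
    _ ≤ ∑ _v : V, q := Finset.sum_le_sum fun v _ => le_trans (degree_le_maxDeg G v) hq
    _ = Fintype.card V * q := by simp [Finset.sum_const, Finset.card_univ, mul_comm]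
    _ = q * Fintype.card V := mul_comm _ _

lemma cardV_le_Y1 (G : SimpleGraph V) (k : ℕ) : Fintype.card V ≤ Y1card G k :=
  le_max_left _ _

lemma triCount_def (G : SimpleGraph V) (k q : ℕ) :
    triCount G k q = q * Y1card G k + k := rfl

lemma cardIota (G : SimpleGraph V) (k q : ℕ) :
    Fintype.card (Fin q × (V ⊕ Fin (Y1card G k - Fintype.card V))) = q * Y1card G k := by
  rw [Fintype.card_prod, Fintype.card_sum, Fintype.card_fin, Fintype.card_fin,
    Nat.add_sub_cancel' (cardV_le_Y1 G k)]

lemma adjUniform (R : MkECRed V W G k q) {i : Fin (triCount G k q)} {a b w : W}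
    (ha : a ∈ R.tri i) (hb : b ∈ R.tri i)
    (hw : w ∈ R.Ypp) (h : R.Ghat.Adj a w) : R.Ghat.Adj b w := by
  by_cases horig : ∃ e, R.edgeIdx e = i
  · obtain ⟨e, rfl⟩ := horig
    rcases R.hYppSurj w hw with ⟨j, v, rfl⟩ | ⟨j, t, rfl⟩
    · rw [R.hAdjOrig e b hb j v]
      rw [R.hAdjOrig e a ha j v] at h
      exact h
    · exact R.hAdjExt _ b hb j t
  · push_neg at horig
    exact R.hAdjNonOrig i horig b hb w hw

lemma tri_nonempty (R : MkECRed V W G k q) (i : Fin (triCount G k q)) :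
    ∃ a, a ∈ R.tri i := by
  have := R.htriCard i
  have h : 0 < (R.tri i).card := by omega
  obtain ⟨a, ha⟩ := Finset.card_pos.mp h
  exact ⟨a, ha⟩

lemma same_tri (R : MkECRed V W G k q) {i i' : Fin (triCount G k q)} {x : W}
    (h : x ∈ R.tri i) (h' : x ∈ R.tri i') : i = i' := by
  by_contra hne
  exact (Finset.disjoint_left.mp (R.htriDisj i i' hne)) h h'

lemma not_in_tri (R : MkECRed V W G k q) {i : Fin (triCount G k q)} {x w : W}
    (h : x ∈ R.tri i) (hw : w ∈ R.Ypp) : x ≠ w := by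
  intro hxw
  exact (Finset.disjoint_left.mp (R.htriYpp i)) h (hxw ▸ hw)

lemma exists_nonorig (hk0 : 0 < k) (hkE : k < (edgeFin G).card) (hq : maxDeg G ≤ q)
    (R : MkECRed V W G k q) : ∃ i, ∀ e, R.edgeIdx e ≠ i := by
  have hm : 2 * (edgeFin G).card ≤ q * Fintype.card V := two_m_le G hq
  have hY : q * Fintype.card V ≤ q * Y1card G k :=
    Nat.mul_le_mul_left q (cardV_le_Y1 G k)
  have hcard : Fintype.card {e : Sym2 V // e ∈ edgeFin G} = (edgeFin G).card :=
    Fintype.card_coe _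
  have hlt : Fintype.card {e : Sym2 V // e ∈ edgeFin G} < Fintype.card (Fin (triCount G k q)) := by
    rw [hcard, Fintype.card_fin, triCount_def]
    omega
  have himg : (Finset.univ.image R.edgeIdx).card < (Finset.univ : Finset (Fin (triCount G k q))).card := by
    rw [Finset.card_image_of_injective _ R.hedgeIdxInj, Finset.card_univ, Finset.card_univ]
    exact hlt
  have hss : Finset.univ.image R.edgeIdx ⊂ Finset.univ := by
    refine Finset.ssubset_iff_subset_ne.mpr ⟨Finset.subset_univ _, fun h => by rw [h] at himg; omega⟩
  obtain ⟨i, _, hi⟩ := Finset.exists_of_ssubset hss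
  exact ⟨i, fun e he => hi (Finset.mem_image.mpr ⟨e, Finset.mem_univ e, he⟩)⟩
  
end Aux

end Stab
namespace Stab

section Aux2
set_option linter.unusedSectionVars false

variable {V W : Type*} [Fintype V] [DecidableEq V] [Fintype W] [DecidableEq W]
  {G : SimpleGraph V} {k q : ℕ}

lemma edge_two {W : Type*} (Ghat : SimpleGraph W) {e : Sym2 W} (h : e ∈ Ghat.edgeSet) :
    ∃ a b, a ≠ b ∧ e = s(a, b) := by
  induction e using Sym2.ind with
  | _ a b =>
    rw [SimpleGraph.mem_edgeSet] at h
    exact ⟨a, b, h.ne, rfl⟩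

lemma matching_edge_cases (R : MkECRed V W G k q) {M : Finset (Sym2 W)}
    (hM : IsMatching R.Ghat M) {e : Sym2 W} (he : e ∈ M)
    (hno : ¬ ∃ w, w ∈ R.Ypp ∧ w ∈ e) : ∃ i, ∀ x ∈ e, x ∈ R.tri i := by
  have hedge : e ∈ R.Ghat.edgeSet := hM.1 e he
  clear he
  induction e using Sym2.ind with
  | _ a b =>
    rw [SimpleGraph.mem_edgeSet] at hedge
    rcases R.hEdges a b hedge with ⟨i, ha, hb⟩ | ⟨i, ha, hb⟩ | ⟨i, hb, ha⟩
    · exact ⟨i, fun x hx => by rcases Sym2.mem_iff.mp hx with rfl | rfl <;> assumption⟩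
    · exact absurd ⟨b, hb, Sym2.mem_mk_right a b⟩ hno
    · exact absurd ⟨a, ha, Sym2.mem_mk_left a b⟩ hno

lemma matching_count (hk0 : 0 < k) (R : MkECRed V W G k q) {M : Finset (Sym2 W)}
    (hM : IsMatching R.Ghat M) :
    M.card ≤ 2 * R.Ypp.card + k ∧
    (M.card = 2 * R.Ypp.card + k → ∀ w ∈ R.Ypp, ∃ e ∈ M, w ∈ e) := by
  classical
  have hT0 : 0 < triCount G k q := by rw [triCount_def]; omega
  set i00 : Fin (triCount G k q) := ⟨0, hT0⟩ with hi00
  obtain ⟨a0, ha0⟩ := tri_nonempty R i00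
  set P : Sym2 W → Prop := fun e => ∃ w, w ∈ R.Ypp ∧ w ∈ e with hP
  set Mc := M.filter P with hMcdef
  set Mi := M.filter (fun e => ¬ P e) with hMidef
  have hsplit : Mc.card + Mi.card = M.card :=
    Finset.card_filter_add_card_filter_not (p := P)
  set f : Sym2 W → W := fun e => if h : P e then h.choose else a0 with hf
  have hfmem : ∀ e ∈ Mc, f e ∈ R.Ypp ∧ f e ∈ e := by
    intro e he
    have hPe : P e := (Finset.mem_filter.mp he).2
    simp only [hf, dif_pos hPe]
    exact hPe.choose_spec
  have hfinj : Set.InjOn f Mc := by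
    intro e1 h1 e2 h2 heq
    by_contra hne
    exact hM.2 e1 (Finset.filter_subset _ _ h1) e2 (Finset.filter_subset _ _ h2) hne (f e1)
      (hfmem e1 h1).2 (heq ▸ (hfmem e2 h2).2)
  have hMcCard : Mc.card ≤ R.Ypp.card :=
    Finset.card_le_card_of_injOn f (fun e he => (hfmem e he).1) hfinj
  set g : Sym2 W → Fin (triCount G k q) := fun e =>
    if h : ∃ i, ∀ x ∈ e, x ∈ R.tri i then h.choose else i00 with hg
  have hgmem : ∀ e ∈ Mi, ∀ x ∈ e, x ∈ R.tri (g e) := by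
    intro e he
    have h' := matching_edge_cases R hM (Finset.filter_subset _ _ he)
      (Finset.mem_filter.mp he).2
    simp only [hg, dif_pos h']
    exact h'.choose_spec
  have hginj : Set.InjOn g Mi := by
    intro e1 h1 e2 h2 heq
    by_contra hne
    obtain ⟨a, b, hab, he1⟩ := edge_two R.Ghat (hM.1 e1 (Finset.filter_subset _ _ h1))
    obtain ⟨c, d, hcd, he2⟩ := edge_two R.Ghat (hM.1 e2 (Finset.filter_subset _ _ h2))
    have ha1 : a ∈ e1 := by rw [he1]; exact Sym2.mem_mk_left a b
    have hb1 : b ∈ e1 := by rw [he1]; exact Sym2.mem_mk_right a b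
    have hc2 : c ∈ e2 := by rw [he2]; exact Sym2.mem_mk_left c d
    have hd2 : d ∈ e2 := by rw [he2]; exact Sym2.mem_mk_right c d
    have hdisj := hM.2 e1 (Finset.filter_subset _ _ h1) e2 (Finset.filter_subset _ _ h2) hne
    have hac : a ≠ c := fun h => hdisj a ha1 (h ▸ hc2)
    have had : a ≠ d := fun h => hdisj a ha1 (h ▸ hd2)
    have hbc : b ≠ c := fun h => hdisj b hb1 (h ▸ hc2)
    have hbd : b ≠ d := fun h => hdisj b hb1 (h ▸ hd2)
    have h4 : ({a, b, c, d} : Finset W) ⊆ R.tri (g e1) := by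
      intro x hx
      simp only [Finset.mem_insert, Finset.mem_singleton] at hx
      rcases hx with rfl | rfl | rfl | rfl
      · exact hgmem e1 h1 x ha1
      · exact hgmem e1 h1 x hb1
      · exact heq ▸ hgmem e2 h2 x hc2
      · exact heq ▸ hgmem e2 h2 x hd2
    have hc4 : ({a, b, c, d} : Finset W).card = 4 := by
      rw [Finset.card_insert_of_notMem (by simp [hab, hac, had]),
        Finset.card_insert_of_notMem (by simp [hbc, hbd]),
        Finset.card_insert_of_notMem (by simp [hcd]), Finset.card_singleton]
    have hle := Finset.card_le_card h4
    rw [hc4, R.htriCard] at hle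
    omega
  have hMiCard : Mi.card ≤ triCount G k q := by
    calc Mi.card ≤ (Finset.univ : Finset (Fin (triCount G k q))).card :=
          Finset.card_le_card_of_injOn g (fun e _ => Finset.mem_univ _) hginj
      _ = triCount G k q := by rw [Finset.card_univ, Fintype.card_fin]
  have hTY : triCount G k q = R.Ypp.card + k := by rw [triCount_def, R.hYppCard]
  constructor
  · omega
  · intro hEq w hw
    have hMcEq : Mc.card = R.Ypp.card := by omega
    have himg : Mc.image f = R.Ypp := by
      apply Finset.eq_of_subset_of_card_le
      · intro x hx
        obtain ⟨e, he, rfl⟩ := Finset.mem_image.mp hx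
        exact (hfmem e he).1
      · rw [Finset.card_image_of_injOn hfinj, hMcEq]
    rw [← himg] at hw
    obtain ⟨e, he, rfl⟩ := Finset.mem_image.mp hw
    exact ⟨e, Finset.filter_subset _ _ he, (hfmem e he).2⟩

end Aux2

end Stab
namespace Stab

section Aux3
set_option linter.unusedSectionVars false
set_option maxHeartbeats 1000000

variable {V W : Type*} [Fintype V] [DecidableEq V] [Fintype W] [DecidableEq W]
  {G : SimpleGraph V} {k q : ℕ}

lemma exists_sdr (hk0 : 0 < k) (hkE : k < (edgeFin G).card) (hq : maxDeg G ≤ q)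
    (R : MkECRed V W G k q) (i0 : Fin (triCount G k q)) :
    ∃ f : Fin q × (V ⊕ Fin (Y1card G k - Fintype.card V)) → Fin (triCount G k q),
      Function.Injective f ∧ ∀ p, f p ≠ i0 ∧
        ∀ a ∈ R.tri (f p), R.Ghat.Adj a (Sum.elim (R.yv p.1) (R.yext p.1) p.2) := by
  classical
  set φ : Fin q × (V ⊕ Fin (Y1card G k - Fintype.card V)) → W :=
    fun p => Sum.elim (R.yv p.1) (R.yext p.1) p.2 with hφ
  have hφY : ∀ p, φ p ∈ R.Ypp := by
    rintro ⟨j, v | t⟩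
    · exact Stab.MkECRed.hyvMem R j v
    · exact Stab.MkECRed.hyextMem R j t
  set tfun : Fin q × (V ⊕ Fin (Y1card G k - Fintype.card V)) → Finset (Fin (triCount G k q)) :=
    fun p => Finset.univ.filter (fun i => i ≠ i0 ∧ ∃ a ∈ R.tri i, R.Ghat.Adj a (φ p))
    with htfun
  have hTN : triCount G k q = q * Y1card G k + k := triCount_def G k q
  have hHall : ∀ s : Finset (Fin q × (V ⊕ Fin (Y1card G k - Fintype.card V))), s.card ≤ (s.biUnion tfun).card := by
    intro s
    rcases s.eq_empty_or_nonempty with rfl | ⟨p0, hp0⟩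
    · simp
    by_cases hext : ∃ p ∈ s, ∃ j t, p = (j, Sum.inr t)
    · obtain ⟨p, hp, j, t, rfl⟩ := hext
      have hsub : Finset.univ.erase i0 ⊆ s.biUnion tfun := by
        intro i hi
        rw [Finset.mem_biUnion]
        obtain ⟨a, ha⟩ := tri_nonempty R i
        exact ⟨_, hp, Finset.mem_filter.mpr ⟨Finset.mem_univ i, (Finset.mem_erase.mp hi).1,
          a, ha, R.hAdjExt i a ha j t⟩⟩
      have h1 := Finset.card_le_card hsub
      rw [Finset.card_erase_of_mem (Finset.mem_univ i0), Finset.card_univ,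
        Fintype.card_fin] at h1
      have h2 : s.card ≤ q * Y1card G k := by
        calc s.card ≤ Fintype.card (Fin q × (V ⊕ Fin (Y1card G k - Fintype.card V))) :=
              Finset.card_le_univ s
          _ = q * Y1card G k := cardIota G k q
      have h3 : 1 ≤ triCount G k q := by omega
      omega
    · push_neg at hext
      set Pv : Finset V := Finset.univ.filter (fun v => ∃ j, (j, Sum.inl v) ∈ s) with hPv
      have hsP : s.card ≤ q * Pv.card := by
        have hsub : s ⊆ Finset.univ ×ˢ (Pv.image Sum.inl) := by
          rintro ⟨j, v | t⟩ hp
          · refine Finset.mem_product.mpr ⟨Finset.mem_univ _, Finset.mem_image.mpr ⟨v, ?_, rfl⟩⟩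
            exact Finset.mem_filter.mpr ⟨Finset.mem_univ _, ⟨j, hp⟩⟩
          · exact absurd rfl (hext (j, Sum.inr t) hp j t)
        calc s.card ≤ _ := Finset.card_le_card hsub
          _ = q * Pv.card := by
            rw [Finset.card_product, Finset.card_univ, Fintype.card_fin,
              Finset.card_image_of_injective _ Sum.inl_injective]
      set EP := ((edgeFin G).attach).filter (fun e => ∃ v ∈ Pv, v ∈ e.1) with hEP
      set EPc := ((edgeFin G).attach).filter (fun e => ¬ ∃ v ∈ Pv, v ∈ e.1) with hEPcdef
      set A := Finset.univ.filter (fun i : Fin (triCount G k q) => ∀ e, R.edgeIdx e ≠ i) with hA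
      set B := EP.image R.edgeIdx with hB
      have hABdisj : Disjoint A B := by
        rw [Finset.disjoint_left]
        intro i hiA hiB
        obtain ⟨e, _, rfl⟩ := Finset.mem_image.mp hiB
        exact (Finset.mem_filter.mp hiA).2 e rfl
      have hsub : (A ∪ B).erase i0 ⊆ s.biUnion tfun := by
        intro i hi
        obtain ⟨hne, hiAB⟩ := Finset.mem_erase.mp hi
        obtain ⟨a, ha⟩ := tri_nonempty R i
        rcases Finset.mem_union.mp hiAB with hiA | hiB
        · rw [Finset.mem_biUnion]
          exact ⟨p0, hp0, Finset.mem_filter.mpr ⟨Finset.mem_univ i, hne, a, ha,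
            R.hAdjNonOrig i (Finset.mem_filter.mp hiA).2 a ha (φ p0) (hφY p0)⟩⟩
        · obtain ⟨e, heEP, rfl⟩ := Finset.mem_image.mp hiB
          obtain ⟨v, hvP, hve⟩ := (Finset.mem_filter.mp heEP).2
          obtain ⟨j, hjs⟩ := (Finset.mem_filter.mp hvP).2
          rw [Finset.mem_biUnion]
          refine ⟨(j, Sum.inl v), hjs, Finset.mem_filter.mpr
            ⟨Finset.mem_univ _, hne, a, ha, ?_⟩⟩
          exact (R.hAdjOrig e a ha j v).mpr hve
      -- cardinalities
      have himc := Finset.card_add_card_compl (Finset.univ.image R.edgeIdx)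
      rw [Finset.card_image_of_injective _ R.hedgeIdxInj, Finset.card_univ,
        Fintype.card_coe, Fintype.card_fin] at himc
      have hAeq : A = (Finset.univ.image R.edgeIdx)ᶜ := by
        ext i
        simp [hA, Finset.mem_compl, Finset.mem_image]
      rw [← hAeq] at himc
      have hBcard : B.card = EP.card := Finset.card_image_of_injective _ R.hedgeIdxInj
      have hmsplit : EP.card + EPc.card = (edgeFin G).card := by
        rw [hEP, hEPcdef, Finset.card_filter_add_card_filter_not, Finset.card_attach]
      have hEPcY : EPc.card ≤ q * (Finset.univ \ Pv).card := by
        have hsubc : EPc ⊆ (Finset.univ \ Pv).biUnion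
            (fun v => EPc.filter (fun e => v ∈ e.1)) := by
          intro e he
          have heEdge : e.1 ∈ G.edgeSet := (Finset.mem_filter.mp e.2).2
          obtain ⟨a, b, -, hab⟩ := edge_two G heEdge
          have hamem : a ∈ e.1 := by rw [hab]; exact Sym2.mem_mk_left a b
          have hnP : a ∉ Pv := fun hP => (Finset.mem_filter.mp he).2 ⟨a, hP, hamem⟩
          exact Finset.mem_biUnion.mpr ⟨a, Finset.mem_sdiff.mpr ⟨Finset.mem_univ a, hnP⟩,
            Finset.mem_filter.mpr ⟨he, hamem⟩⟩
        have hperv : ∀ v ∈ Finset.univ \ Pv, (EPc.filter (fun e => v ∈ e.1)).card ≤ q := by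
          intro v _
          have hle : (EPc.filter (fun e => v ∈ e.1)).card ≤ (G.incidenceFinset v).card := by
            apply Finset.card_le_card_of_injOn (fun e => e.1)
            · intro e he
              simp only [Finset.mem_coe, SimpleGraph.mem_incidenceFinset]
              exact ⟨(Finset.mem_filter.mp e.2).2, (Finset.mem_filter.mp he).2⟩
            · intro e1 _ e2 _ h; exact Subtype.ext h
          rw [SimpleGraph.card_incidenceFinset_eq_degree] at hle
          exact le_trans hle (le_trans (degree_le_maxDeg G v) hq)
        calc EPc.card ≤ ((Finset.univ \ Pv).biUnion
              (fun v => EPc.filter (fun e => v ∈ e.1))).card := Finset.card_le_card hsubc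
          _ ≤ ∑ v ∈ Finset.univ \ Pv, (EPc.filter (fun e => v ∈ e.1)).card :=
              Finset.card_biUnion_le
          _ ≤ ∑ _v ∈ Finset.univ \ Pv, q := Finset.sum_le_sum hperv
          _ = (Finset.univ \ Pv).card * q := Finset.sum_const _
          _ = q * (Finset.univ \ Pv).card := mul_comm _ _
      have hXYZ : q * Pv.card + q * (Finset.univ \ Pv).card = q * Fintype.card V := by
        rw [← Nat.mul_add]
        congr 1
        have h1 : (Finset.univ \ Pv).card = Fintype.card V - Pv.card := by
          rw [Finset.card_sdiff_of_subset (Finset.subset_univ _), Finset.card_univ]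
        have h2 : Pv.card ≤ Fintype.card V := Finset.card_le_univ Pv
        omega
      have hZN : q * Fintype.card V ≤ q * Y1card G k :=
        Nat.mul_le_mul_left q (cardV_le_Y1 G k)
      have c1 := Finset.card_le_card hsub
      have c2 : (A ∪ B).card = A.card + B.card := Finset.card_union_of_disjoint hABdisj
      have c3 : (A ∪ B).card ≤ ((A ∪ B).erase i0).card + 1 := by
        by_cases h : i0 ∈ A ∪ B
        · have := Finset.card_erase_of_mem h
          have hpos : 0 < (A ∪ B).card := Finset.card_pos.mpr ⟨i0, h⟩
          omega
        · rw [Finset.erase_eq_of_notMem h]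
          omega
      have hkE' := hkE
      linarith
  obtain ⟨f, hfinj, hfmem⟩ := (Finset.all_card_le_biUnion_card_iff_exists_injective tfun).mp hHall
  refine ⟨f, hfinj, fun p => ?_⟩
  obtain ⟨-, hne, a, ha, hadj⟩ := Finset.mem_filter.mp (hfmem p)
  exact ⟨hne, fun b hb => adjUniform R ha hb (hφY p) hadj⟩

end Aux3

end Stab
namespace Stab

section Aux4
set_option linter.unusedSectionVars false
set_option maxHeartbeats 1000000

variable {V W : Type*} [Fintype V] [DecidableEq V] [Fintype W] [DecidableEq W]
  {G : SimpleGraph V} {k q : ℕ}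

lemma exists_good_matching (hk0 : 0 < k) (hkE : k < (edgeFin G).card) (hq : maxDeg G ≤ q)
    (R : MkECRed V W G k q) {i0 : Fin (triCount G k q)} {w : W} (hw : w ∈ R.tri i0) :
    ∃ M, IsMatching R.Ghat M ∧ M.card = 2 * R.Ypp.card + k ∧ Exposed M w := by
  classical
  obtain ⟨f, hfinj, hf⟩ := exists_sdr hk0 hkE hq R i0
  set φ := fun p : Fin q × (V ⊕ Fin (Y1card G k - Fintype.card V)) =>
    Sum.elim (R.yv p.1) (R.yext p.1) p.2 with hφ
  have hφY : ∀ p, φ p ∈ R.Ypp := by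
    rintro ⟨j, v | t⟩
    exacts [R.hyvMem j v, R.hyextMem j t]
  have hφinj : Function.Injective φ := R.hInj
  have hfne : ∀ p, f p ≠ i0 := fun p => (hf p).1
  have hf2 : ∀ p, ∀ a ∈ R.tri (f p), R.Ghat.Adj a (φ p) := fun p => (hf p).2
  have hav : ∀ i, ∃ x, x ∈ R.tri i ∧ (i = i0 → x = w) := by
    intro i
    by_cases h : i = i0
    · subst h; exact ⟨w, hw, fun _ => rfl⟩
    · obtain ⟨a, ha⟩ := tri_nonempty R i
      exact ⟨a, ha, fun h' => absurd h' h⟩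
  choose av havmem havw using hav
  have hpair : ∀ i, ∃ x y : W, x ≠ y ∧ ((R.tri i).erase (av i) = {x, y}) := by
    intro i
    have h2 : ((R.tri i).erase (av i)).card = 2 := by
      rw [Finset.card_erase_of_mem (havmem i), R.htriCard]
    exact Finset.card_eq_two.mp h2
  choose pa pb hpapb hpaireq using hpair
  have hpamem : ∀ i, pa i ∈ (R.tri i).erase (av i) := by
    intro i; rw [hpaireq i]; simp
  have hpbmem : ∀ i, pb i ∈ (R.tri i).erase (av i) := by
    intro i; rw [hpaireq i]; simp
  have hpatri : ∀ i, pa i ∈ R.tri i := fun i => Finset.mem_of_mem_erase (hpamem i)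
  have hpbtri : ∀ i, pb i ∈ R.tri i := fun i => Finset.mem_of_mem_erase (hpbmem i)
  have hpane : ∀ i, pa i ≠ av i := fun i => Finset.ne_of_mem_erase (hpamem i)
  have hpbne : ∀ i, pb i ≠ av i := fun i => Finset.ne_of_mem_erase (hpbmem i)
  have hnotri : ∀ (p) (i) (x : W), x ∈ R.tri i → φ p ≠ x :=
    fun p i x hx => (not_in_tri R hx (hφY p)).symm
  set Mcr := Finset.univ.image (fun p => s(φ p, av (f p))) with hMcr
  set Mint := Finset.univ.image
    (fun i : Fin (triCount G k q) => s(pa i, pb i)) with hMint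
  refine ⟨Mcr ∪ Mint, ⟨?_, ?_⟩, ?_, ?_⟩
  · -- edges of Ghat
    intro e he
    rcases Finset.mem_union.mp he with h | h
    · obtain ⟨p, -, rfl⟩ := Finset.mem_image.mp h
      exact (SimpleGraph.mem_edgeSet R.Ghat).mpr (hf2 p (av (f p)) (havmem (f p))).symm
    · obtain ⟨i, -, rfl⟩ := Finset.mem_image.mp h
      exact (SimpleGraph.mem_edgeSet R.Ghat).mpr
        (R.htriClique i (pa i) (hpatri i) (pb i) (hpbtri i) (hpapb i))
  · -- disjointness
    intro e1 he1 e2 he2 hne x hx1 hx2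
    rcases Finset.mem_union.mp he1 with h1 | h1 <;>
      rcases Finset.mem_union.mp he2 with h2 | h2
    · obtain ⟨p, -, rfl⟩ := Finset.mem_image.mp h1
      obtain ⟨p', -, rfl⟩ := Finset.mem_image.mp h2
      have hpp' : p ≠ p' := fun h => hne (by rw [h])
      rcases Sym2.mem_iff.mp hx1 with rfl | rfl <;>
        rcases Sym2.mem_iff.mp hx2 with h | h
      · exact hpp' (hφinj h)
      · exact hnotri p (f p') _ (havmem (f p')) h
      · exact hnotri p' (f p) _ (havmem (f p)) h.symm
      · exact hpp' (hfinj (same_tri R (havmem (f p)) (h ▸ havmem (f p'))))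
    · obtain ⟨p, -, rfl⟩ := Finset.mem_image.mp h1
      obtain ⟨i, -, rfl⟩ := Finset.mem_image.mp h2
      rcases Sym2.mem_iff.mp hx1 with rfl | rfl <;>
        rcases Sym2.mem_iff.mp hx2 with h | h
      · exact hnotri p i _ (hpatri i) h
      · exact hnotri p i _ (hpbtri i) h
      · have hi : f p = i := same_tri R (havmem (f p)) (h ▸ hpatri i)
        exact hpane i (by rw [← h, hi])
      · have hi : f p = i := same_tri R (havmem (f p)) (h ▸ hpbtri i)
        exact hpbne i (by rw [← h, hi])
    · obtain ⟨i, -, rfl⟩ := Finset.mem_image.mp h1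
      obtain ⟨p, -, rfl⟩ := Finset.mem_image.mp h2
      rcases Sym2.mem_iff.mp hx1 with rfl | rfl <;>
        rcases Sym2.mem_iff.mp hx2 with h | h
      · exact hnotri p i _ (hpatri i) h.symm
      · have hi : f p = i := same_tri R (havmem (f p)) (h.symm ▸ hpatri i)
        exact hpane i (by rw [h, hi])
      · exact hnotri p i _ (hpbtri i) h.symm
      · have hi : f p = i := same_tri R (havmem (f p)) (h.symm ▸ hpbtri i)
        exact hpbne i (by rw [h, hi])
    · obtain ⟨i, -, rfl⟩ := Finset.mem_image.mp h1
      obtain ⟨i', -, rfl⟩ := Finset.mem_image.mp h2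
      have hii' : i ≠ i' := fun h => hne (by rw [h])
      rcases Sym2.mem_iff.mp hx1 with rfl | rfl <;>
        rcases Sym2.mem_iff.mp hx2 with h | h
      · exact hii' (same_tri R (hpatri i) (h ▸ hpatri i'))
      · exact hii' (same_tri R (hpatri i) (h ▸ hpbtri i'))
      · exact hii' (same_tri R (hpbtri i) (h ▸ hpatri i'))
      · exact hii' (same_tri R (hpbtri i) (h ▸ hpbtri i'))
  · -- cardinality
    have hdisj : Disjoint Mcr Mint := by
      rw [Finset.disjoint_left]
      intro e h1 h2
      obtain ⟨p, -, rfl⟩ := Finset.mem_image.mp h1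
      obtain ⟨i, -, heq⟩ := Finset.mem_image.mp h2
      rcases Sym2.eq_iff.mp heq with ⟨h, -⟩ | ⟨-, h⟩
      · exact hnotri p i _ (hpatri i) h.symm
      · exact hnotri p i _ (hpbtri i) h.symm
    have hcr : Mcr.card = q * Y1card G k := by
      rw [hMcr, Finset.card_image_of_injective, Finset.card_univ, cardIota]
      intro p p' heq
      rcases Sym2.eq_iff.mp heq with ⟨h, -⟩ | ⟨h, -⟩
      · exact hφinj h
      · exact absurd h (hnotri p (f p') _ (havmem (f p')))
    have hint : Mint.card = triCount G k q := by
      rw [hMint, Finset.card_image_of_injective, Finset.card_univ, Fintype.card_fin]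
      intro i i' heq
      rcases Sym2.eq_iff.mp heq with ⟨h, -⟩ | ⟨h, -⟩
      · exact same_tri R (hpatri i) (h ▸ hpatri i')
      · exact same_tri R (hpatri i) (h ▸ hpbtri i')
    rw [Finset.card_union_of_disjoint hdisj, hcr, hint, triCount_def, R.hYppCard]
    ring
  · -- exposed
    intro e he hwe
    rcases Finset.mem_union.mp he with h | h
    · obtain ⟨p, -, rfl⟩ := Finset.mem_image.mp h
      rcases Sym2.mem_iff.mp hwe with h' | h'
      · exact hnotri p i0 w hw h'.symm
      · have h'' : av (f p) ∈ R.tri i0 := h' ▸ hw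
        exact hfne p (same_tri R (havmem (f p)) h'')
    · obtain ⟨i, -, rfl⟩ := Finset.mem_image.mp h
      rcases Sym2.mem_iff.mp hwe with h' | h'
      · have hi : i = i0 := same_tri R (hpatri i) (h' ▸ hw)
        exact hpane i (by rw [← h', hi, havw i0 rfl])
      · have hi : i = i0 := same_tri R (hpbtri i) (h' ▸ hw)
        exact hpbne i (by rw [← h', hi, havw i0 rfl])

end Aux4

end Stab
namespace Stab

set_option linter.unusedSectionVars false in
theorem stmt15 {V W : Type*} [Fintype V] [DecidableEq V] [Fintype W] [DecidableEq W]
    (G : SimpleGraph V) (k q : ℕ) (hk0 : 0 < k) (hkE : k < (edgeFin G).card)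
    (hq : maxDeg G ≤ q)
    (R : MkECRed V W G k q) :
    nu R.Ghat = 2 * R.Ypp.card + k ∧
    (∀ w : W, w ∉ R.Ypp → ∃ M, IsMaxMatching R.Ghat M ∧ Exposed M w) ∧
    (∀ M, IsMaxMatching R.Ghat M → ∀ w ∈ R.Ypp, ¬ Exposed M w) ∧
    geX R.Ghat = {w : W | w ∉ R.Ypp} ∧
    geY R.Ghat = ↑R.Ypp ∧
    geZ R.Ghat = ∅ := by
  classical
  have hT0 : 0 < triCount G k q := by rw [triCount_def]; omega
  obtain ⟨a0, ha0⟩ := tri_nonempty R ⟨0, hT0⟩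
  obtain ⟨M0, hM0, hM0card, -⟩ := exists_good_matching hk0 hkE hq R ha0
  have hub : ∀ M, IsMatching R.Ghat M → M.card ≤ 2 * R.Ypp.card + k :=
    fun M hM => (matching_count hk0 R hM).1
  have hnu : nu R.Ghat = 2 * R.Ypp.card + k := by
    apply le_antisymm
    · apply csSup_le
      · exact ⟨M0.card, M0, hM0, rfl⟩
      · rintro n ⟨M, hM, rfl⟩
        exact hub M hM
    · refine le_csSup ⟨2 * R.Ypp.card + k, ?_⟩ ⟨M0, hM0, hM0card⟩
      rintro n ⟨M, hM, rfl⟩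
      exact hub M hM
  have hmax : ∀ M, IsMatching R.Ghat M → M.card = 2 * R.Ypp.card + k →
      IsMaxMatching R.Ghat M := by
    intro M hM hcard
    exact ⟨hM, fun M' hM' => le_of_le_of_eq (hub M' hM') hcard.symm⟩
  have hbul2 : ∀ w : W, w ∉ R.Ypp → ∃ M, IsMaxMatching R.Ghat M ∧ Exposed M w := by
    intro w hw
    rcases R.hcover w with h | ⟨i, hi⟩
    · exact absurd h hw
    obtain ⟨M, hM, hMcard, hMexp⟩ := exists_good_matching hk0 hkE hq R hi
    exact ⟨M, hmax M hM hMcard, hMexp⟩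
  have hbul3 : ∀ M, IsMaxMatching R.Ghat M → ∀ w ∈ R.Ypp, ¬ Exposed M w := by
    intro M hM w hw hexp
    have hcard : M.card = 2 * R.Ypp.card + k :=
      le_antisymm (hub M hM.1) (le_of_eq_of_le hM0card.symm (hM.2 M0 hM0))
    obtain ⟨e, he, hwe⟩ := (matching_count hk0 R hM.1).2 hcard w hw
    exact hexp e he hwe
  have hgeX : geX R.Ghat = {w : W | w ∉ R.Ypp} := by
    ext w
    constructor
    · rintro ⟨M, hMmax, hexp⟩ hw
      exact hbul3 M hMmax w hw hexp
    · intro hw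
      exact hbul2 w hw
  have hgeY : geY R.Ghat = ↑R.Ypp := by
    ext w
    constructor
    · rintro ⟨hnX, -⟩
      rw [hgeX] at hnX
      simpa using not_not.mp hnX
    · intro hw
      have hw' : w ∈ R.Ypp := hw
      refine ⟨?_, ?_⟩
      · rw [hgeX]
        simpa using hw'
      · obtain ⟨i, hno⟩ := exists_nonorig hk0 hkE hq R
        obtain ⟨a, ha⟩ := tri_nonempty R i
        have haY : a ∉ R.Ypp := fun h => Finset.disjoint_left.mp (R.htriYpp i) ha h
        refine ⟨a, ?_, R.hAdjNonOrig i hno a ha w hw'⟩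
        rw [hgeX]
        exact haY
  have hgeZ : geZ R.Ghat = ∅ := by
    ext w
    simp only [Set.mem_empty_iff_false, iff_false]
    rintro ⟨hnX, hnY⟩
    rw [hgeX] at hnX
    rw [hgeY] at hnY
    exact hnX (by simpa using hnY)
  exact ⟨hnu, hbul2, hbul3, hgeX, hgeY, hgeZ⟩

end Stab
end
end

section
/- Let (𝒮,𝒳) be a Set Cover instance in which every element lies in at least 2 sets, let N > (nm)², and let Ĝ be the SC-reduction graph. Let (M,y,c) be a feasible MFASP solution of Ĝ such that: M matches S_j^i to c_j^i for all j ∈ [m] and i ∈ [n]; y_v = 1/2 for every vertex v of every clique C_j^i; y_{S_j^i} = y_{S_j^1} for all i ∈ [n] and j ∈ [m]; and M exposes exactly one vertex in each odd cycle Q_i, and this exposed vertex is not a dummy vertex. Then the set P := {j ∈ [m] : S_j^1 is adjacent in Ĝ to an M-exposed vertex} satisfies ∪_{j∈P} S_j = 𝒳, and ∑_{e} c_e ≥ n(1 + |P|/2). -/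
open Finset
open scoped Classical

noncomputable section

namespace Stab

/-- `F_i`: the number of sets containing the element `i` -/
def Fi {n m : ℕ} (S : Fin m → Finset (Fin n)) (i : Fin n) : ℕ :=
  (Finset.univ.filter fun j => i ∈ S j).card

/-- the length of the odd cycle `Q_i`: `F_i` if `F_i` is odd, `F_i + 1` otherwise -/
def Qlen {n m : ℕ} (S : Fin m → Finset (Fin n)) (i : Fin n) : ℕ :=
  if Odd (Fi S i) then Fi S i else Fi S i + 1

/-- The SC-reduction graph `Ĝ` of the Set Cover instance given by sets
`S 0, …, S (m−1)` over elements `Fin n`, with clique-size parameter `N`, bundled with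
all the data of its construction: vertices `Sv j i` (the copies `S_j^i`, forming `Y'`),
cliques `Cl j i` of size `2N+1` with designated vertex `cv j i` joined to `Sv j i`,
odd cycles `Q_i` with vertices `xv i 0, …, xv i (Qlen−1)` (the last one being a dummy
vertex when `F_i` is even), an enumeration `sigma i` of the sets containing element `i`;
`xv i k` (for `k < F_i`) is joined to all `n` copies of the `k`-th set containing `i`
and dummy vertices are joined to all of `Y'`; there are no further edges and no further
vertices. -/
structure SCRed (n m : ℕ) (S : Fin m → Finset (Fin n)) (N : ℕ)
    (W : Type*) [Fintype W] [DecidableEq W] where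
  Ghat : SimpleGraph W
  Sv : Fin m → Fin n → W
  Cl : Fin m → Fin n → Finset W
  cv : Fin m → Fin n → W
  xv : (i : Fin n) → Fin (Qlen S i) → W
  sigma : (i : Fin n) → Fin (Fi S i) → Fin m
  hsigmaMem : ∀ i k, i ∈ S (sigma i k)
  hsigmaInj : ∀ i, Function.Injective (sigma i)
  hsigmaSurj : ∀ i j, i ∈ S j → ∃ k, sigma i k = j
  hSvInj : Function.Injective fun p : Fin m × Fin n => Sv p.1 p.2
  hcvCl : ∀ j i, cv j i ∈ Cl j i
  hClCard : ∀ j i, (Cl j i).card = 2 * N + 1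
  hClClique : ∀ j i, ∀ a ∈ Cl j i, ∀ b ∈ Cl j i, a ≠ b → Ghat.Adj a b
  hSvcv : ∀ j i, Ghat.Adj (Sv j i) (cv j i)
  hClDisj : ∀ j i j' i', (j, i) ≠ (j', i') → Disjoint (Cl j i) (Cl j' i')
  hSvCl : ∀ j i j' i', Sv j i ∉ Cl j' i'
  hxvInj : ∀ i k i' k', xv i k = xv i' k' → i = i' ∧ (k : ℕ) = (k' : ℕ)
  hxvSv : ∀ i k j l, xv i k ≠ Sv j l
  hxvCl : ∀ i k j l, xv i k ∉ Cl j l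
  hCycle : ∀ (i : Fin n) (k l : Fin (Qlen S i)),
    Ghat.Adj (xv i k) (xv i l) ↔
      (((k : ℕ) + 1) % Qlen S i = (l : ℕ) ∨ ((l : ℕ) + 1) % Qlen S i = (k : ℕ))
  hxvSvAdj : ∀ (i : Fin n) (k : Fin (Qlen S i)) (j : Fin m) (l : Fin n),
    Ghat.Adj (xv i k) (Sv j l) ↔
      (if h : (k : ℕ) < Fi S i then j = sigma i ⟨(k : ℕ), h⟩ else True)
  hvertices : ∀ w : W,
    (∃ j i, w = Sv j i) ∨ (∃ j i, w ∈ Cl j i) ∨ ∃ i k, w = xv i k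
  hedges : ∀ a b : W, Ghat.Adj a b →
    (∃ j i, a ∈ Cl j i ∧ b ∈ Cl j i) ∨
    (∃ j i, (a = Sv j i ∧ b = cv j i) ∨ (b = Sv j i ∧ a = cv j i)) ∨
    (∃ i k l, a = xv i k ∧ b = xv i l) ∨
    (∃ i k j l, (a = xv i k ∧ b = Sv j l) ∨ (b = xv i k ∧ a = Sv j l))

end Stab

namespace Stab

open Fin.NatCast

private lemma out_spec' {W : Type*} (e : Sym2 W) : e = s(e.out.1, e.out.2) :=
  (Quot.out_eq e).symm

private lemma mem_out {W : Type*} {v : W} {e : Sym2 W} :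
    v ∈ e ↔ v = e.out.1 ∨ v = e.out.2 := by
  conv_lhs => rw [out_spec' e]
  exact Sym2.mem_iff

private lemma sy_eq' {W : Type*} (y : W → ℝ) {a b : W} {e : Sym2 W} (h : e = s(a, b)) :
    y e.out.1 + y e.out.2 = y a + y b := by
  have h2 : s(e.out.1, e.out.2) = s(a, b) := (out_spec' e).symm.trans h
  rw [Sym2.eq_iff] at h2
  rcases h2 with ⟨rfl, rfl⟩ | ⟨rfl, rfl⟩
  · rfl
  · ring

private lemma pairs_lb (g : ℕ → ℝ) (hp : ∀ t, 1 ≤ g t + g (t + 1)) (a r : ℕ) :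
    (r : ℝ) ≤ ∑ t ∈ Finset.Ico a (a + 2 * r), g t := by
  induction r with
  | zero => simp
  | succ r ih =>
    have hsplit : ∑ t ∈ Finset.Ico a (a + 2 * (r + 1)), g t
        = ∑ t ∈ Finset.Ico a (a + 2 * r), g t + (g (a + 2 * r) + g (a + 2 * r + 1)) := by
      rw [← Finset.sum_Ico_consecutive g (by omega : a ≤ a + 2 * r)
        (by omega : a + 2 * r ≤ a + 2 * (r + 1))]
      have hset : Finset.Ico (a + 2 * r) (a + 2 * (r + 1)) = {a + 2 * r, a + 2 * r + 1} := by
        ext x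
        simp only [Finset.mem_Ico, Finset.mem_insert, Finset.mem_singleton]
        omega
      rw [hset, Finset.sum_pair (by omega)]
    rw [hsplit]
    have h1 := hp (a + 2 * r)
    push_cast
    linarith

private lemma cyc_lb (r : ℕ) (g : ℕ → ℝ)
    (hp : ∀ t, 1 ≤ g t + g (t + 1)) (h0 : g 0 = 0) (hq : g (2 * r + 3) = 0) :
    (r : ℝ) + 2 ≤ ∑ t ∈ Finset.range (2 * r + 3), g t := by
  have h1 : (1 : ℝ) ≤ g 1 := by have := hp 0; linarith
  have h2 : (1 : ℝ) ≤ g (2 * r + 2) := by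
    have h3 := hp (2 * r + 2)
    have h4 : 2 * r + 2 + 1 = 2 * r + 3 := by omega
    rw [h4, hq] at h3
    linarith
  have hmid := pairs_lb g hp 2 r
  have hsplit : ∑ t ∈ Finset.range (2 * r + 3), g t
      = (g 0 + g 1) + (∑ t ∈ Finset.Ico 2 (2 + 2 * r), g t) + g (2 * r + 2) := by
    rw [Finset.range_eq_Ico,
      ← Finset.sum_Ico_consecutive g (by omega : 0 ≤ 2 + 2 * r) (by omega : 2 + 2 * r ≤ 2 * r + 3),
      ← Finset.sum_Ico_consecutive g (by omega : 0 ≤ 2) (by omega : (2 : ℕ) ≤ 2 + 2 * r)]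
    have ha : Finset.Ico 0 2 = {0, 1} := by
      ext x; simp only [Finset.mem_Ico, Finset.mem_insert, Finset.mem_singleton]; omega
    have hb : Finset.Ico (2 + 2 * r) (2 * r + 3) = {2 * r + 2} := by
      ext x; simp only [Finset.mem_Ico, Finset.mem_singleton]; omega
    rw [ha, hb, Finset.sum_pair (by omega), Finset.sum_singleton]
  rw [hsplit, h0]
  linarith

private lemma tight {W : Type*} [Fintype W] [DecidableEq W] {G : SimpleGraph W}
    {M : Finset (Sym2 W)} {y : W → ℝ} {c : Sym2 W → ℝ}
    (hfeas : FeasSol G M y c) :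
    (∀ e ∈ M, 1 + c e = y e.out.1 + y e.out.2) ∧ ∀ v, Exposed M v → y v = 0 := by
  classical
  obtain ⟨⟨hMe, hMd⟩, hc0, ⟨hy0, hcov⟩, heq⟩ := hfeas
  have hadj : ∀ e ∈ M, G.Adj e.out.1 e.out.2 := by
    intro e he
    have h1 := hMe e he
    rw [out_spec' e, SimpleGraph.mem_edgeSet] at h1
    exact h1
  have hne : ∀ e ∈ M, e.out.1 ≠ e.out.2 := fun e he => (hadj e he).ne
  have hle : ∀ e ∈ M, 1 + c e ≤ y e.out.1 + y e.out.2 := by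
    intro e he
    have h1 := hcov e.out.1 e.out.2 (hadj e he)
    rwa [← out_spec' e] at h1
  set tp : Sym2 W → Finset W := fun e => {e.out.1, e.out.2} with htp
  have hdisj : (↑M : Set (Sym2 W)).PairwiseDisjoint tp := by
    intro e he f hf hef
    simp only [Function.onFun, Finset.disjoint_left, htp]
    intro v hv hv'
    rw [Finset.mem_insert, Finset.mem_singleton] at hv hv'
    exact hMd e (Finset.mem_coe.mp he) f (Finset.mem_coe.mp hf) hef v
      (mem_out.mpr hv) (mem_out.mpr hv')
  have hsum1 : ∑ e ∈ M, (y e.out.1 + y e.out.2) = ∑ v ∈ M.biUnion tp, y v := by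
    rw [Finset.sum_biUnion hdisj]
    exact Finset.sum_congr rfl fun e he => (Finset.sum_pair (hne e he)).symm
  have hsum2 : ∑ v ∈ M.biUnion tp, y v ≤ ∑ v, y v :=
    Finset.sum_le_sum_of_subset_of_nonneg (Finset.subset_univ _) fun v _ _ => hy0 v
  have h1 : ∑ e ∈ M, (1 + c e) ≤ ∑ e ∈ M, (y e.out.1 + y e.out.2) := Finset.sum_le_sum hle
  have hEq1 : ∑ e ∈ M, (1 + c e) = ∑ e ∈ M, (y e.out.1 + y e.out.2) := by linarith
  refine ⟨fun e he => (Finset.sum_eq_sum_iff_of_le hle).mp hEq1 e he, ?_⟩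
  intro v hv
  have hzero : ∑ w ∈ Finset.univ \ M.biUnion tp, y w = 0 := by
    rw [Finset.sum_sdiff_eq_sub (Finset.subset_univ _)]
    linarith
  refine (Finset.sum_eq_zero_iff_of_nonneg fun w _ => hy0 w).mp hzero v ?_
  rw [Finset.mem_sdiff]
  refine ⟨Finset.mem_univ _, fun hvB => ?_⟩
  obtain ⟨e, he, hve⟩ := Finset.mem_biUnion.mp hvB
  rw [htp, Finset.mem_insert, Finset.mem_singleton] at hve
  exact hv e he (mem_out.mpr hve)


/-- let `(M,y,c)` be a feasible MFASP solution of the SC-reduction graph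
such that `M` matches every `S_j^i` to `c_j^i`, `y = 1/2` on all clique vertices,
`y (S_j^i) = y (S_j^1)` for all copies, and `M` exposes exactly one, non-dummy, vertex in
each odd cycle `Q_i`.  Then the index set `P` of those `j` for which `S_j^1` is adjacent
to an `M`-exposed vertex is a set cover, and the cost of `c` is at least
`n(1 + |P|/2)`. -/
theorem stmt18 {n m N : ℕ} {W : Type*} [Fintype W] [DecidableEq W]
    (hn : 0 < n) (S : Fin m → Finset (Fin n))
    (hF : ∀ i, 2 ≤ Fi S i) (hN : (n * m) ^ 2 < N)
    (R : SCRed n m S N W)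
    (M : Finset (Sym2 W)) (y : W → ℝ) (c : Sym2 W → ℝ)
    (hfeas : FeasSol R.Ghat M y c)
    (hmatch : ∀ j i, s(R.Sv j i, R.cv j i) ∈ M)
    (hyCl : ∀ j i, ∀ w ∈ R.Cl j i, y w = 1 / 2)
    (hySv : ∀ j i, y (R.Sv j i) = y (R.Sv j ⟨0, hn⟩))
    (hexp : ∀ i : Fin n, ∃! k : Fin (Qlen S i), Exposed M (R.xv i k))
    (hnodummy : ∀ (i : Fin n) (k : Fin (Qlen S i)), Exposed M (R.xv i k) → (k : ℕ) < Fi S i) :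
    (∀ i : Fin n, ∃ j ∈ Finset.univ.filter
        (fun j : Fin m => ∃ w : W, R.Ghat.Adj (R.Sv j ⟨0, hn⟩) w ∧ Exposed M w),
      i ∈ S j) ∧
    (n : ℝ) * (1 + ((Finset.univ.filter
        (fun j : Fin m => ∃ w : W, R.Ghat.Adj (R.Sv j ⟨0, hn⟩) w ∧ Exposed M w)).card : ℝ) / 2)
      ≤ cost R.Ghat c := by
  classical
  have htight := (tight hfeas).1
  have hexp0 := (tight hfeas).2
  obtain ⟨⟨hMe, hMd⟩, hc0, ⟨hy0, hcov⟩, -⟩ := hfeas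
  set P := Finset.univ.filter
      (fun j : Fin m => ∃ w : W, R.Ghat.Adj (R.Sv j ⟨0, hn⟩) w ∧ Exposed M w) with hP
  have hmemEF : ∀ {e : Sym2 W}, e ∈ R.Ghat.edgeSet → e ∈ edgeFin R.Ghat :=
    fun h => Finset.mem_filter.mpr ⟨Finset.mem_univ _, h⟩
  have hcovnc : ∀ u v : W, R.Ghat.Adj u v → 1 ≤ y u + y v := by
    intro u v h
    have h1 := hcov u v h
    have h2 : 0 ≤ c s(u, v) := hc0 _ (hmemEF ((R.Ghat.mem_edgeSet).mpr h))
    have h3 : 1 + c s(u, v) ≤ y u + y v := h1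
    linarith
  -- choice of exposed vertex in each cycle
  have hKex : ∀ i : Fin n, ∃ K : Fin (Qlen S i),
      Exposed M (R.xv i K) ∧ ∀ k, k ≠ K → ¬Exposed M (R.xv i k) := by
    intro i
    obtain ⟨K, h1, h2⟩ := hexp i
    exact ⟨K, h1, fun k hk hke => hk (h2 k hke)⟩
  choose K hKexp hKuniq using hKex
  constructor
  -- Part 1: covering
  · intro i
    have hlt : (K i : ℕ) < Fi S i := hnodummy i (K i) (hKexp i)
    refine ⟨R.sigma i ⟨K i, hlt⟩, ?_, R.hsigmaMem i _⟩
    rw [hP, Finset.mem_filter]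
    refine ⟨Finset.mem_univ _, R.xv i (K i), ?_, hKexp i⟩
    have h1 := (R.hxvSvAdj i (K i) (R.sigma i ⟨K i, hlt⟩) ⟨0, hn⟩).mpr (by rw [dif_pos hlt])
    exact h1.symm
  -- Part 2: cost bound
  set Mi : Fin n → Finset (Sym2 W) :=
    fun i => M.filter (fun e => ∃ k l : Fin (Qlen S i), e = s(R.xv i k, R.xv i l)) with hMi
  set A : Finset (Sym2 W) :=
    (Finset.univ : Finset (Fin m × Fin n)).image
      (fun p => s(R.Sv p.1 p.2, R.cv p.1 p.2)) with hA
  have hAM : A ⊆ M := by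
    intro e he
    obtain ⟨p, -, rfl⟩ := Finset.mem_image.mp he
    exact hmatch p.1 p.2
  have hMiM : ∀ i, Mi i ⊆ M := fun i => Finset.filter_subset _ _
  -- classification: a non-exposed cycle vertex is matched inside its cycle
  have hclassify : ∀ (i : Fin n) (k : Fin (Qlen S i)), k ≠ K i →
      ∃ e ∈ Mi i, R.xv i k ∈ e := by
    intro i k hk
    have hnexp : ¬Exposed M (R.xv i k) := hKuniq i k hk
    rw [Exposed] at hnexp
    push_neg at hnexp
    obtain ⟨e, he, hve⟩ := hnexp
    refine ⟨e, ?_, hve⟩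
    have hadj : R.Ghat.Adj e.out.1 e.out.2 := by
      have h1 := hMe e he
      rw [out_spec' e, SimpleGraph.mem_edgeSet] at h1
      exact h1
    have hvout : R.xv i k = e.out.1 ∨ R.xv i k = e.out.2 := mem_out.mp hve
    rcases R.hedges _ _ hadj with ⟨j', i', h1, h2⟩ | ⟨j', i', hsc⟩ |
        ⟨i', k', l', hx1, hx2⟩ | ⟨i', k', j', l', hxs⟩
    · exfalso
      rcases hvout with h | h
      · exact R.hxvCl i k j' i' (by rw [h]; exact h1)
      · exact R.hxvCl i k j' i' (by rw [h]; exact h2)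
    · exfalso
      rcases hsc with ⟨h1, h2⟩ | ⟨h1, h2⟩ <;> rcases hvout with h | h
      · exact R.hxvSv i k j' i' (h.trans h1)
      · exact R.hxvCl i k j' i' (by rw [h.trans h2]; exact R.hcvCl j' i')
      · exact R.hxvCl i k j' i' (by rw [h.trans h2]; exact R.hcvCl j' i')
      · exact R.hxvSv i k j' i' (h.trans h1)
    · have hii : i = i' := by
        rcases hvout with h | h
        · exact (R.hxvInj i k i' k' (h.trans hx1)).1
        · exact (R.hxvInj i k i' l' (h.trans hx2)).1
      subst hii
      rw [hMi]
      simp only [Finset.mem_filter]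
      exact ⟨he, k', l', by rw [out_spec' e, hx1, hx2]⟩
    · exfalso
      have hSv : R.Sv j' l' ∈ e := by
        rcases hxs with ⟨h1, h2⟩ | ⟨h1, h2⟩
        · exact mem_out.mpr (Or.inr h2.symm)
        · exact mem_out.mpr (Or.inl h2.symm)
      have hM2 := hmatch j' l'
      have hne : e ≠ s(R.Sv j' l', R.cv j' l') := by
        intro heq
        have hxe : R.xv i' k' ∈ e := by
          rcases hxs with ⟨h1, -⟩ | ⟨h1, -⟩
          · exact mem_out.mpr (Or.inl h1.symm)
          · exact mem_out.mpr (Or.inr h1.symm)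
        rw [heq, Sym2.mem_iff] at hxe
        rcases hxe with h | h
        · exact R.hxvSv i' k' j' l' h
        · exact R.hxvCl i' k' j' l' (by rw [h]; exact R.hcvCl j' l')
      exact hMd e he _ hM2 hne _ hSv (Sym2.mem_mk_left _ _)
  -- structure of Mi-edges
  have hMiStruct : ∀ (i : Fin n), ∀ e ∈ Mi i, ∃ k l : Fin (Qlen S i),
      e = s(R.xv i k, R.xv i l) ∧ k ≠ l ∧ k ≠ K i ∧ l ≠ K i := by
    intro i e he
    rw [hMi] at he
    obtain ⟨heM, k, l, hekl⟩ := Finset.mem_filter.mp he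
    refine ⟨k, l, hekl, ?_, ?_, ?_⟩
    · intro h
      subst h
      have hd := R.Ghat.not_isDiag_of_mem_edgeSet (hMe e heM)
      rw [hekl] at hd
      exact hd (Sym2.mk_isDiag_iff.mpr rfl)
    · intro h
      subst h
      exact hKexp i e heM (by rw [hekl]; exact Sym2.mem_mk_left _ _)
    · intro h
      subst h
      exact hKexp i e heM (by rw [hekl]; exact Sym2.mem_mk_right _ _)
  set tp : Sym2 W → Finset W := fun e => {e.out.1, e.out.2} with htp
  -- per-cycle bound
  have hcyc : ∀ i : Fin n, 1 ≤ ∑ e ∈ Mi i, c e := by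
    intro i
    have hqodd : Odd (Qlen S i) := by
      rw [Qlen]
      split_ifs with h
      · exact h
      · exact (Nat.not_odd_iff_even.mp h).add_one
    have hq3 : 3 ≤ Qlen S i := by
      have hF2 := hF i
      rw [Qlen]
      split_ifs with h
      · rcases h with ⟨t, ht⟩; omega
      · omega
    obtain ⟨r, hr⟩ : ∃ r, Qlen S i = 2 * r + 3 := by
      rcases hqodd with ⟨s, hs⟩
      exact ⟨s - 1, by omega⟩
    have hdisj : (↑(Mi i) : Set (Sym2 W)).PairwiseDisjoint tp := by
      intro e he f hf hef
      simp only [Function.onFun, Finset.disjoint_left, htp]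
      intro v hv hv'
      rw [Finset.mem_insert, Finset.mem_singleton] at hv hv'
      exact hMd e (hMiM i (Finset.mem_coe.mp he)) f (hMiM i (Finset.mem_coe.mp hf)) hef v
        (mem_out.mpr hv) (mem_out.mpr hv')
    have hne2 : ∀ e ∈ Mi i, e.out.1 ≠ e.out.2 := by
      intro e he
      have h1 := hMe e (hMiM i he)
      rw [out_spec' e, SimpleGraph.mem_edgeSet] at h1
      exact h1.ne
    have hBeq : (Mi i).biUnion tp = (Finset.univ.erase (K i)).image (R.xv i) := by
      ext v
      simp only [Finset.mem_biUnion, Finset.mem_image, Finset.mem_erase, Finset.mem_univ,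
        and_true]
      constructor
      · rintro ⟨e, he, hv⟩
        obtain ⟨k, l, hekl, hkl, hkK, hlK⟩ := hMiStruct i e he
        have hv' : v = e.out.1 ∨ v = e.out.2 := by
          rw [htp, Finset.mem_insert, Finset.mem_singleton] at hv
          exact hv
        have hout : (e.out.1 = R.xv i k ∧ e.out.2 = R.xv i l) ∨
            (e.out.1 = R.xv i l ∧ e.out.2 = R.xv i k) := by
          have h2 : s(e.out.1, e.out.2) = s(R.xv i k, R.xv i l) := (out_spec' e).symm.trans hekl
          rw [Sym2.eq_iff] at h2
          tauto
        rcases hout with ⟨h1, h2⟩ | ⟨h1, h2⟩ <;> rcases hv' with rfl | rfl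
        · exact ⟨k, hkK, h1.symm⟩
        · exact ⟨l, hlK, h2.symm⟩
        · exact ⟨l, hlK, h1.symm⟩
        · exact ⟨k, hkK, h2.symm⟩
      · rintro ⟨k, hkK, rfl⟩
        obtain ⟨e, he, hv⟩ := hclassify i k hkK
        refine ⟨e, he, ?_⟩
        rw [htp, Finset.mem_insert, Finset.mem_singleton]
        exact mem_out.mp hv
    have hxinj : ∀ a ∈ Finset.univ.erase (K i), ∀ b ∈ Finset.univ.erase (K i),
        R.xv i a = R.xv i b → a = b :=
      fun a _ b _ h => Fin.ext ((R.hxvInj i a i b h).2)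
    have hsum1 : ∑ e ∈ Mi i, (y e.out.1 + y e.out.2) = ∑ v ∈ (Mi i).biUnion tp, y v := by
      rw [Finset.sum_biUnion hdisj]
      refine Finset.sum_congr rfl fun e he => ?_
      rw [htp, Finset.sum_pair (hne2 e he)]
    have hsum2 : ∑ v ∈ (Mi i).biUnion tp, y v
        = ∑ k ∈ Finset.univ.erase (K i), y (R.xv i k) := by
      rw [hBeq, Finset.sum_image hxinj]
    have hcard : 2 * (Mi i).card = Qlen S i - 1 := by
      have h1 : ((Mi i).biUnion tp).card = ∑ e ∈ Mi i, (tp e).card :=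
        Finset.card_biUnion fun e he f hf hef =>
          hdisj (Finset.mem_coe.mpr he) (Finset.mem_coe.mpr hf) hef
      have h2 : ∀ e ∈ Mi i, (tp e).card = 2 := fun e he => by
        rw [htp]; exact Finset.card_pair (hne2 e he)
      have h3 : ((Finset.univ.erase (K i)).image (R.xv i)).card = Qlen S i - 1 := by
        rw [Finset.card_image_of_injOn fun a ha b hb h => hxinj a ha b hb h,
          Finset.card_erase_of_mem (Finset.mem_univ _), Finset.card_univ, Fintype.card_fin]
      calc 2 * (Mi i).card = ∑ _e ∈ Mi i, 2 := by
            rw [Finset.sum_const, smul_eq_mul, mul_comm]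
        _ = ∑ e ∈ Mi i, (tp e).card := (Finset.sum_congr rfl h2).symm
        _ = ((Mi i).biUnion tp).card := h1.symm
        _ = Qlen S i - 1 := by rw [hBeq]; exact h3
    have hsumc : ((Mi i).card : ℝ) + ∑ e ∈ Mi i, c e
        = ∑ k ∈ Finset.univ.erase (K i), y (R.xv i k) := by
      have h4 : ∑ e ∈ Mi i, (1 + c e) = ∑ k ∈ Finset.univ.erase (K i), y (R.xv i k) := by
        rw [← hsum2, ← hsum1]
        exact Finset.sum_congr rfl fun e he => htight e (hMiM i he)
      rw [Finset.sum_add_distrib, Finset.sum_const, nsmul_eq_mul, mul_one] at h4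
      exact h4
    -- lower bound on the erase-sum via the odd-cycle lemma
    have hK0 : y (R.xv i (K i)) = 0 := hexp0 _ (hKexp i)
    have hfull : ∑ k ∈ Finset.univ.erase (K i), y (R.xv i k)
        = ∑ k : Fin (Qlen S i), y (R.xv i k) :=
      Finset.sum_erase _ hK0
    haveI : NeZero (Qlen S i) := ⟨by omega⟩
    set g : ℕ → ℝ := fun t => y (R.xv i (K i + (t : Fin (Qlen S i)))) with hg
    have hrot : ∑ k : Fin (Qlen S i), y (R.xv i k) = ∑ t ∈ Finset.range (Qlen S i), g t := by
      rw [← Fin.sum_univ_eq_sum_range g (Qlen S i)]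
      exact (Fintype.sum_bijective (fun t : Fin (Qlen S i) => K i + t)
        (Equiv.addLeft (K i)).bijective (fun t => g ↑t) (fun k => y (R.xv i k))
        (fun t => by rw [hg]; simp [Fin.cast_val_eq_self])).symm
    have hadjg : ∀ a : Fin (Qlen S i), R.Ghat.Adj (R.xv i a) (R.xv i (a + 1)) := by
      intro a
      rw [R.hCycle]
      left
      rw [Fin.val_add, Fin.val_one', Nat.mod_eq_of_lt (show 1 < Qlen S i by omega)]
    have hpg : ∀ t : ℕ, 1 ≤ g t + g (t + 1) := by
      intro t
      have h6 := hcovnc _ _ (hadjg (K i + (t : Fin (Qlen S i))))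
      have h7 : (K i + (t : Fin (Qlen S i))) + 1 = K i + ((t + 1 : ℕ) : Fin (Qlen S i)) := by
        push_cast
        simp only [Nat.cast_add, Nat.cast_one, add_assoc]
      rw [h7] at h6
      rw [hg]
      exact h6
    have hg0 : g 0 = 0 := by
      rw [hg]
      simpa using hK0
    have hgq : g (2 * r + 3) = 0 := by
      have hcast : ((2 * r + 3 : ℕ) : Fin (Qlen S i)) = 0 := by
        rw [← hr]
        exact Fin.natCast_self _
      rw [hg]
      simp only [hcast, add_zero]
      exact hK0
    have hlb := cyc_lb r g hpg hg0 hgq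
    rw [← hr] at hlb
    have hcardR : ((Mi i).card : ℝ) = (r : ℝ) + 1 := by
      have h8 : (Mi i).card = r + 1 := by omega
      rw [h8]
      push_cast
      ring
    rw [hfull, hrot] at hsumc
    linarith
  -- the Sv–cv edges sum
  have hAc : ∑ e ∈ A, c e = ∑ p : Fin m × Fin n, (y (R.Sv p.1 ⟨0, hn⟩) - 1 / 2) := by
    rw [hA, Finset.sum_image ?_]
    · refine Finset.sum_congr rfl fun p _ => ?_
      have h1 := htight _ (hmatch p.1 p.2)
      rw [sy_eq' y rfl, hyCl p.1 p.2 _ (R.hcvCl p.1 p.2), hySv p.1 p.2] at h1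
      linarith
    · intro p _ p' _ h
      rw [Sym2.eq_iff] at h
      rcases h with ⟨h1, -⟩ | ⟨h1, -⟩
      · exact R.hSvInj (show (fun pp : Fin m × Fin n => R.Sv pp.1 pp.2) p
          = (fun pp : Fin m × Fin n => R.Sv pp.1 pp.2) p' from h1)
      · exact absurd (by rw [h1]; exact R.hcvCl p'.1 p'.2) (R.hSvCl p.1 p.2 p'.1 p'.2)
  have hyhalf : ∀ j : Fin m, 1 / 2 ≤ y (R.Sv j ⟨0, hn⟩) := by
    intro j
    have h1 := hcovnc _ _ (R.hSvcv j ⟨0, hn⟩)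
    rw [hyCl j _ _ (R.hcvCl j ⟨0, hn⟩)] at h1
    linarith
  have hyone : ∀ j ∈ P, 1 ≤ y (R.Sv j ⟨0, hn⟩) := by
    intro j hj
    rw [hP, Finset.mem_filter] at hj
    obtain ⟨-, w, hadj, hwexp⟩ := hj
    have h1 := hcovnc _ _ hadj
    rw [hexp0 w hwexp] at h1
    linarith
  have hAlb : (n : ℝ) * ((P.card : ℝ) / 2) ≤ ∑ e ∈ A, c e := by
    rw [hAc, Fintype.sum_prod_type]
    have hcst : ∀ j : Fin m, ∑ _i : Fin n, (y (R.Sv j ⟨0, hn⟩) - 1 / 2)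
        = (n : ℝ) * (y (R.Sv j ⟨0, hn⟩) - 1 / 2) := fun j => by
      rw [Finset.sum_const, Finset.card_univ, Fintype.card_fin, nsmul_eq_mul]
    rw [Finset.sum_congr rfl fun j _ => hcst j]
    have h1 : ∑ _j ∈ P, ((n : ℝ) * (1 / 2))
        ≤ ∑ j ∈ P, (n : ℝ) * (y (R.Sv j ⟨0, hn⟩) - 1 / 2) := by
      refine Finset.sum_le_sum fun j hj => ?_
      have h2 := hyone j hj
      have hn' : (0 : ℝ) ≤ n := Nat.cast_nonneg n
      nlinarith
    have h2 : ∑ j ∈ P, (n : ℝ) * (y (R.Sv j ⟨0, hn⟩) - 1 / 2)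
        ≤ ∑ j : Fin m, (n : ℝ) * (y (R.Sv j ⟨0, hn⟩) - 1 / 2) := by
      refine Finset.sum_le_sum_of_subset_of_nonneg (Finset.filter_subset _ _) fun j _ _ => ?_
      have h3 := hyhalf j
      have hn' : (0 : ℝ) ≤ n := Nat.cast_nonneg n
      nlinarith
    have h3 : ∑ _j ∈ P, ((n : ℝ) * (1 / 2)) = (P.card : ℝ) * ((n : ℝ) * (1 / 2)) := by
      rw [Finset.sum_const, nsmul_eq_mul]
    rw [hP] at h1 h3 ⊢
    nlinarith [h1, h2, h3]
  -- assembly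
  have hsub : A ∪ Finset.univ.biUnion Mi ⊆ edgeFin R.Ghat := by
    intro e he
    rcases Finset.mem_union.mp he with h | h
    · exact hmemEF (hMe e (hAM h))
    · obtain ⟨i, -, hi⟩ := Finset.mem_biUnion.mp h
      exact hmemEF (hMe e (hMiM i hi))
  have hcost1 : ∑ e ∈ A ∪ Finset.univ.biUnion Mi, c e ≤ cost R.Ghat c :=
    Finset.sum_le_sum_of_subset_of_nonneg hsub fun e heE _ => hc0 e heE
  have hAdisj : ∀ i, Disjoint A (Mi i) := by
    intro i
    rw [Finset.disjoint_left]
    intro e heA heMi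
    rw [hA] at heA
    obtain ⟨p, -, rfl⟩ := Finset.mem_image.mp heA
    obtain ⟨k, l, hekl, -, -, -⟩ := hMiStruct i _ heMi
    rw [Sym2.eq_iff] at hekl
    rcases hekl with ⟨h1, -⟩ | ⟨h1, -⟩
    · exact R.hxvSv i k p.1 p.2 h1.symm
    · exact R.hxvSv i l p.1 p.2 h1.symm
  have hMidisj : ∀ i ∈ (Finset.univ : Finset (Fin n)), ∀ i' ∈ (Finset.univ : Finset (Fin n)),
      i ≠ i' → Disjoint (Mi i) (Mi i') := by
    intro i _ i' _ hii
    rw [Finset.disjoint_left]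
    intro e he he'
    obtain ⟨k, l, hekl, -, -, -⟩ := hMiStruct i _ he
    obtain ⟨k', l', hekl', -, -, -⟩ := hMiStruct i' _ he'
    rw [hekl, Sym2.eq_iff] at hekl'
    rcases hekl' with ⟨h1, -⟩ | ⟨h1, -⟩ <;> exact hii (R.hxvInj _ _ _ _ h1).1
  have hsplit : ∑ e ∈ A ∪ Finset.univ.biUnion Mi, c e
      = ∑ e ∈ A, c e + ∑ i : Fin n, ∑ e ∈ Mi i, c e := by
    rw [Finset.sum_union ((Finset.disjoint_biUnion_right _ _ _).mpr fun i _ => hAdisj i),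
      Finset.sum_biUnion fun i hi i' hi' h => hMidisj i hi i' hi' h]
  have hTlb : (n : ℝ) ≤ ∑ i : Fin n, ∑ e ∈ Mi i, c e := by
    calc (n : ℝ) = ∑ _i : Fin n, (1 : ℝ) := by simp
      _ ≤ _ := Finset.sum_le_sum fun i _ => hcyc i
  calc (n : ℝ) * (1 + ((Finset.univ.filter (fun j : Fin m => ∃ w : W,
          R.Ghat.Adj (R.Sv j ⟨0, hn⟩) w ∧ Exposed M w)).card : ℝ) / 2)
      = (n : ℝ) * ((P.card : ℝ) / 2) + n := by rw [hP]; ring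
    _ ≤ ∑ e ∈ A, c e + ∑ i : Fin n, ∑ e ∈ Mi i, c e := add_le_add hAlb hTlb
    _ = ∑ e ∈ A ∪ Finset.univ.biUnion Mi, c e := hsplit.symm
    _ ≤ cost R.Ghat c := hcost1

end Stab
end
end
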